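/- arXiv:1404.1298 — 5 statements merged into one kernel-verified Lean document; each statement's English description precedes it below -/
import Mathlib

section
/- Let X ⊆ ℝ² be a set of n points, no three of which are collinear, and let i be an integer with 1 ≤ i ≤ n−1. Then a_i = |𝒜_{i+1}|, i.e., the number of i-sets of X equals the number of closed halfplanes H such that X ∩ H has exactly i+1 elements and exactly two points of X lie on the boundary line of H. -/
open Set

set_option maxHeartbeats 1000000
noncomputable section

/-- The Euclidean plane. -/
abbrev Pt : Type := EuclideanSpace ℝ (Fin 2)

/-- `T` is an `S`-range: a homothetic copy of `S` with positive ratio. -/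
def IsRange (S T : Set Pt) : Prop :=
  ∃ (c : ℝ) (v : Pt), 0 < c ∧ T = (fun x => c • x + v) '' S

/-- A straight line in the plane. -/
def IsLine (l : Set Pt) : Prop :=
  ∃ (f : Pt →ₗ[ℝ] ℝ) (a : ℝ), f ≠ 0 ∧ l = {x | f x = a}

/-- A closed halfplane. -/
def IsClosedHalfplane (H : Set Pt) : Prop :=
  ∃ (f : Pt →ₗ[ℝ] ℝ) (a : ℝ), f ≠ 0 ∧ H = {x | f x ≤ a}

/-- An open halfplane bounded by the line through `p` and `q`. -/
def IsOpenHalfplaneOf (p q : Pt) (L : Set Pt) : Prop :=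
  ∃ (f : Pt →ₗ[ℝ] ℝ) (a : ℝ), f ≠ 0 ∧ f p = a ∧ f q = a ∧ L = {x | a < f x}

/-- `S` is a nice shape: a non-empty convex compact set such that every boundary
point has exactly one touching line and the boundary contains no non-trivial
straight line segment. -/
def NiceShape (S : Set Pt) : Prop :=
  S.Nonempty ∧ Convex ℝ S ∧ IsCompact S ∧
  (∀ p ∈ frontier S, ∃! l : Set Pt, IsLine l ∧ l ∩ S = {p}) ∧
  (∀ x ∈ frontier S, ∀ y ∈ frontier S, segment ℝ x y ⊆ frontier S → x = y)

/-- No four points of `A` lie on the boundary of a common `S`-range. -/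
def NoFourOnBoundary (S A : Set Pt) : Prop :=
  ∀ T : Set Pt, IsRange S T →
    ∀ p₁ p₂ p₃ p₄ : Pt, p₁ ∈ A ∩ frontier T → p₂ ∈ A ∩ frontier T →
      p₃ ∈ A ∩ frontier T → p₄ ∈ A ∩ frontier T →
      p₁ ≠ p₂ → p₁ ≠ p₃ → p₁ ≠ p₄ → p₂ ≠ p₃ → p₂ ≠ p₄ → p₃ ≠ p₄ → False

/-- `X` is in general position with respect to `S`: no two points on a vertical
line, no three points collinear, and no four points on the boundary of a common
`S`-range. -/
def GenPos (S : Set Pt) (X : Finset Pt) : Prop :=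
  (∀ p ∈ X, ∀ q ∈ X, p ≠ q → p 0 ≠ q 0) ∧
  (∀ p ∈ X, ∀ q ∈ X, ∀ r ∈ X, p ≠ q → p ≠ r → q ≠ r →
    ¬ Collinear ℝ ({p, q, r} : Set Pt)) ∧
  NoFourOnBoundary S ↑X

/-- The hyperedges of the `k`-uniform `S`-capturing hypergraph on `X`:
`k`-element subsets of `X` captured by some `S`-range. -/
def capturedSets (S : Set Pt) (X : Finset Pt) (k : ℕ) : Set (Set Pt) :=
  {Y | Y ⊆ ↑X ∧ Y.ncard = k ∧ ∃ T : Set Pt, IsRange S T ∧ ↑X ∩ T = Y}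

/-- The `i`-sets of `X`: `i`-element subsets of `X` separable by a straight line,
i.e. captured by a closed halfplane.  `aᵢ` is the number of such sets. -/
def iSets (X : Finset Pt) (i : ℕ) : Set (Set Pt) :=
  {Y | Y ⊆ ↑X ∧ Y.ncard = i ∧ ∃ H : Set Pt, IsClosedHalfplane H ∧ ↑X ∩ H = Y}

/-- `𝒜ᵢ`: closed halfplanes containing exactly `i` points of `X`, exactly two of
which lie on the boundary line. -/
def repHalfplanes (X : Finset Pt) (i : ℕ) : Set (Set Pt) :=
  {H | IsClosedHalfplane H ∧ ((↑X : Set Pt) ∩ H).ncard = i ∧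
    ((↑X : Set Pt) ∩ frontier H).ncard = 2}

/-- `𝒮_pq`: the `S`-ranges having both `p` and `q` on their boundary. -/
def rangesThrough (S : Set Pt) (p q : Pt) : Set (Set Pt) :=
  {T | IsRange S T ∧ p ∈ frontier T ∧ q ∈ frontier T}

/-- The ranges in `𝒮_pq` that come strictly after `S₁` (w.r.t. `≺`, i.e. inclusion
of the intersections with `L`) and have a point of `X` on their boundary that is
not on the boundary of `S₁`. -/
def nextCandidates (S : Set Pt) (p q : Pt) (L : Set Pt) (X : Finset Pt) (S₁ : Set Pt) :
    Set (Set Pt) :=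
  {S₂ | S₂ ∈ rangesThrough S p q ∧ S₁ ∩ L ⊂ S₂ ∩ L ∧
    ((frontier S₂ \ frontier S₁) ∩ ↑X).Nonempty}

/-- `ℛ₁ᵏ`: Type I ranges, i.e. `S`-ranges containing exactly `k` points of `X`,
exactly three of which are on the boundary. -/
def typeIRanges (S : Set Pt) (X : Finset Pt) (k : ℕ) : Set (Set Pt) :=
  {T | IsRange S T ∧ ((↑X : Set Pt) ∩ T).ncard = k ∧
    ((↑X : Set Pt) ∩ frontier T).ncard = 3}

/-- `ℛ(Y)`: the Type I representative ranges of `Y`. -/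
def repRanges (S : Set Pt) (X : Finset Pt) (Y : Set Pt) : Set (Set Pt) :=
  {T | IsRange S T ∧ ↑X ∩ T = Y ∧ ((↑X : Set Pt) ∩ frontier T).ncard = 3}

/-- `ℰ₁ᵏ`: Type I hyperedges. -/
def typeIEdges (S : Set Pt) (X : Finset Pt) (k : ℕ) : Set (Set Pt) :=
  {Y | Y ⊆ ↑X ∧ Y.ncard = k ∧ (repRanges S X Y).Nonempty}

/-- `ℰ₂ᵏ`: Type II hyperedges, captured by some `S`-range but by no `S`-range with
three points of `X` on its boundary. -/
def typeIIEdges (S : Set Pt) (X : Finset Pt) (k : ℕ) : Set (Set Pt) :=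
  {Y | Y ∈ capturedSets S X k ∧ ¬ (repRanges S X Y).Nonempty}

abbrev LF := Pt →ₗ[ℝ] ℝ
section
variable {α : Type*}

noncomputable def lfun (A B : ℝ) : LF where
  toFun x := A * x 0 + B * x 1
  map_add' x y := by simp [PiLp.add_apply]; ring
  map_smul' c x := by simp [PiLp.smul_apply]; ring

lemma lfun_apply (A B : ℝ) (x : Pt) : lfun A B x = A * x 0 + B * x 1 := rfl

noncomputable def e0 : Pt := EuclideanSpace.single 0 1
noncomputable def e1 : Pt := EuclideanSpace.single 1 1

@[simp] lemma e0_apply0 : (e0 : Pt) 0 = 1 := by simp [e0, EuclideanSpace.single_apply]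
@[simp] lemma e0_apply1 : (e0 : Pt) 1 = 0 := by simp [e0, EuclideanSpace.single_apply]
@[simp] lemma e1_apply0 : (e1 : Pt) 0 = 0 := by simp [e1, EuclideanSpace.single_apply]
@[simp] lemma e1_apply1 : (e1 : Pt) 1 = 1 := by simp [e1, EuclideanSpace.single_apply]

lemma decomp (x : Pt) : x = x 0 • e0 + x 1 • e1 := by
  ext i
  fin_cases i <;> simp [e0, e1, PiLp.add_apply, PiLp.smul_apply, EuclideanSpace.single_apply]

lemma apply_decomp (f : LF) (x : Pt) : f x = x 0 * f e0 + x 1 * f e1 := by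
  conv_lhs => rw [decomp x]
  simp [map_add, map_smul]

@[simp] lemma lfun_e0 (A B : ℝ) : lfun A B e0 = A := by simp [lfun_apply]
@[simp] lemma lfun_e1 (A B : ℝ) : lfun A B e1 = B := by simp [lfun_apply]

lemma lf_ext {f g : LF} (h0 : f e0 = g e0) (h1 : f e1 = g e1) : f = g := by
  apply LinearMap.ext; intro x
  rw [apply_decomp f, apply_decomp g, h0, h1]

lemma lfun_eq (f : LF) : lfun (f e0) (f e1) = f := lf_ext (by simp) (by simp)

lemma lf_ne_zero_iff (f : LF) : f ≠ 0 ↔ ¬ (f e0 = 0 ∧ f e1 = 0) := by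
  constructor
  · rintro hf ⟨h0, h1⟩
    exact hf (lf_ext (by simp [h0]) (by simp [h1]))
  · rintro h rfl; exact h ⟨rfl, rfl⟩

noncomputable def Jmap (f : LF) : LF := lfun (f e1) (-(f e0))

lemma Jmap_apply (f : LF) (x : Pt) : Jmap f x = f e1 * x 0 - f e0 * x 1 := by
  simp [Jmap, lfun_apply]; ring

@[simp] lemma Jmap_e0 (f : LF) : Jmap f e0 = f e1 := by simp [Jmap]
@[simp] lemma Jmap_e1 (f : LF) : Jmap f e1 = -(f e0) := by simp [Jmap]

lemma Jmap_smul (c : ℝ) (f : LF) : Jmap (c • f) = c • Jmap f := by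
  apply lf_ext <;> simp [mul_comm]

lemma sumsq_pos (f : LF) (hf : f ≠ 0) : 0 < f e0 ^ 2 + f e1 ^ 2 := by
  rcases (lf_ne_zero_iff f).mp hf with h
  rcases eq_or_ne (f e0) 0 with h0 | h0
  · have h1 : f e1 ≠ 0 := fun h1 => h ⟨h0, h1⟩
    positivity
  · positivity

lemma eq_zero_of_J (f : LF) (hf : f ≠ 0) {v : Pt} (h1 : f v = 0) (h2 : Jmap f v = 0) :
    v = 0 := by
  rw [apply_decomp] at h1
  rw [Jmap_apply] at h2
  have hs := sumsq_pos f hf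
  have k0 : (f e0 ^ 2 + f e1 ^ 2) * v 0 = 0 := by linear_combination (f e0) * h1 + (f e1) * h2
  have k1 : (f e0 ^ 2 + f e1 ^ 2) * v 1 = 0 := by linear_combination (f e1) * h1 - (f e0) * h2
  have hv0 : v 0 = 0 := by
    rcases mul_eq_zero.mp k0 with h | h
    · exact absurd h hs.ne'
    · exact h
  have hv1 : v 1 = 0 := by
    rcases mul_eq_zero.mp k1 with h | h
    · exact absurd h hs.ne'
    · exact h
  have := decomp v
  rw [hv0, hv1] at this
  simpa using this

noncomputable def kvec (f : LF) : Pt := f e1 • e0 - f e0 • e1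

lemma exists_kvec (f : LF) (hf : f ≠ 0) {v : Pt} (h : f v = 0) : ∃ c : ℝ, v = c • kvec f := by
  have hs := sumsq_pos f hf
  refine ⟨(v 0 * f e1 - v 1 * f e0) / (f e0 ^ 2 + f e1 ^ 2), ?_⟩
  rw [apply_decomp] at h
  have hv0 : v 0 = (v 0 * f e1 - v 1 * f e0) / (f e0 ^ 2 + f e1 ^ 2) * f e1 := by
    field_simp; linear_combination (f e0) * h
  have hv1 : v 1 = (v 0 * f e1 - v 1 * f e0) / (f e0 ^ 2 + f e1 ^ 2) * (-(f e0)) := by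
    field_simp; linear_combination (f e1) * h
  ext i
  fin_cases i <;>
    simp [kvec, PiLp.smul_apply, PiLp.sub_apply] <;>
    [exact hv0.trans (by ring); exact hv1.trans (by ring)]

lemma collinear_of_f_eq (f : LF) (hf : f ≠ 0) (a : ℝ) {z1 z2 z3 : Pt}
    (h1 : f z1 = a) (h2 : f z2 = a) (h3 : f z3 = a) :
    Collinear ℝ ({z1, z2, z3} : Set Pt) := by
  rw [collinear_iff_of_mem (Set.mem_insert z1 _)]
  refine ⟨kvec f, ?_⟩
  intro p hp
  have hfp : f (p - z1) = 0 := by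
    rcases hp with rfl | rfl | rfl <;> simp [map_sub, h1, h2, h3]
  obtain ⟨c, hc⟩ := exists_kvec f hf hfp
  refine ⟨c, ?_⟩
  rw [← hc]
  simp

lemma exists_one (f : LF) (hf : f ≠ 0) : ∃ w : Pt, f w = 1 := by
  have : ∃ v : Pt, f v ≠ 0 := by
    by_contra h
    push_neg at h
    exact hf (LinearMap.ext fun v => by simp [h v])
  obtain ⟨v, hv⟩ := this
  exact ⟨(f v)⁻¹ • v, by simp [map_smul, inv_mul_cancel₀ hv]⟩

lemma frontier_halfplane (f : LF) (hf : f ≠ 0) (a : ℝ) :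
    frontier {x : Pt | f x ≤ a} = {x | f x = a} := by
  have hc : Continuous f := f.continuous_of_finiteDimensional
  obtain ⟨w, hw⟩ := exists_one f hf
  have hint : interior {x : Pt | f x ≤ a} = {x | f x < a} := by
    apply Subset.antisymm
    · intro x hx
      have hxle : f x ≤ a := interior_subset (s := {x : Pt | f x ≤ a}) hx
      rcases lt_or_eq_of_le hxle with h | h
      · exact h
      · exfalso
        obtain ⟨ε, hε, hball⟩ := Metric.isOpen_iff.mp isOpen_interior x hx
        set t := ε / (2 * (‖w‖ + 1)) with ht
        have hwpos : (0:ℝ) < ‖w‖ + 1 := by positivity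
        have htpos : 0 < t := by positivity
        have hmem : x + t • w ∈ Metric.ball x ε := by
          rw [Metric.mem_ball, dist_eq_norm]
          have : x + t • w - x = t • w := by abel
          rw [this, norm_smul, Real.norm_eq_abs, abs_of_pos htpos]
          calc t * ‖w‖ ≤ t * (‖w‖ + 1) := by nlinarith [norm_nonneg w]
            _ = ε / 2 := by rw [ht]; field_simp
            _ < ε := by linarith
        have : f (x + t • w) ≤ a := interior_subset (s := {x : Pt | f x ≤ a}) (hball hmem)
        rw [map_add, map_smul, smul_eq_mul, hw, mul_one, h] at this
        linarith
    · intro x hx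
      have : IsOpen {x : Pt | f x < a} := isOpen_lt hc continuous_const
      exact this.subset_interior_iff.mpr (fun y (hy : f y < a) => le_of_lt hy) hx
  have hclo : closure {x : Pt | f x ≤ a} = {x | f x ≤ a} :=
    (isClosed_le hc continuous_const).closure_eq
  rw [frontier, hclo, hint]
  ext x
  simp only [mem_diff, mem_setOf_eq, not_lt]
  constructor
  · rintro ⟨h1, h2⟩; linarith
  · intro h; exact ⟨le_of_eq h, ge_of_eq h⟩

lemma halfplane_rep_unique {f g : LF} {a b : ℝ} (hf : f ≠ 0) (hg : g ≠ 0)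
    (h : {x : Pt | f x ≤ a} = {x | g x ≤ b}) :
    ∃ c : ℝ, 0 < c ∧ g = c • f ∧ b = c * a := by
  have hiff : ∀ x : Pt, f x ≤ a ↔ g x ≤ b := fun x => by
    constructor <;> intro hx
    · have : x ∈ {x : Pt | f x ≤ a} := hx
      rw [h] at this; exact this
    · have : x ∈ {x : Pt | g x ≤ b} := hx
      rw [← h] at this; exact this
  obtain ⟨w, hw⟩ := exists_one f hf
  have hker : ∀ v : Pt, f v = 0 → g v = 0 := by
    intro v hv
    by_contra hgv
    have key : ∀ t : ℝ, a * g w + t * g v ≤ b := by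
      intro t
      have h0 : f (a • w + t • v) ≤ a := by
        rw [map_add, map_smul, map_smul, hv, smul_eq_mul, smul_eq_mul, hw]; simp
      have h1 := (hiff _).mp h0
      rw [map_add, map_smul, map_smul, smul_eq_mul, smul_eq_mul] at h1
      exact h1
    have := key ((b + 1 - a * g w) / g v)
    rw [div_mul_cancel₀ _ hgv] at this
    linarith
  set c := g w with hc
  have hgf : g = c • f := by
    apply LinearMap.ext
    intro x
    have h1 : f (x - f x • w) = 0 := by
      rw [map_sub, map_smul, smul_eq_mul, hw, mul_one, sub_self]
    have h2 := hker _ h1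
    rw [map_sub, map_smul, smul_eq_mul, sub_eq_zero] at h2
    rw [LinearMap.smul_apply, smul_eq_mul, h2, mul_comm]
  have hca : g (a • w) = c * a := by rw [map_smul, smul_eq_mul, hc, mul_comm]
  have hfa : f (a • w) = a := by rw [map_smul, smul_eq_mul, hw, mul_one]
  have hcaleb : c * a ≤ b := by
    have := (hiff (a • w)).mp (le_of_eq hfa)
    rwa [hca] at this
  have hcpos : 0 < c := by
    rcases lt_trichotomy c 0 with hlt | heq | hgt
    · exfalso
      have h1 : ¬ f ((a+1) • w) ≤ a := by
        rw [map_smul, smul_eq_mul, hw, mul_one]; linarith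
      have h2 : ¬ g ((a+1) • w) ≤ b := fun hx => h1 ((hiff _).mpr hx)
      have : g ((a+1) • w) = c * (a+1) := by
        rw [hgf]; simp only [LinearMap.smul_apply, map_smul, smul_eq_mul, hw, mul_one]; ring
      rw [this] at h2
      nlinarith
    · exfalso
      apply hg
      rw [hgf, heq, zero_smul]
    · exact hgt
  refine ⟨c, hcpos, hgf, le_antisymm ?_ hcaleb⟩
  have h1 : g ((b / c) • w) ≤ b := by
    rw [hgf]; simp only [LinearMap.smul_apply, map_smul, smul_eq_mul, hw, mul_one]
    rw [div_mul_cancel₀ _ hcpos.ne']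
  have h2 := (hiff _).mpr h1
  rw [map_smul, smul_eq_mul, hw, mul_one] at h2
  have hb : c * (b / c) = b := by field_simp
  nlinarith [mul_le_mul_of_nonneg_left h2 hcpos.le]

lemma exists_pos_mul_lt' (s : Finset α) (c w : α → ℝ) (hc : ∀ p ∈ s, 0 < c p) :
    ∃ δ : ℝ, 0 < δ ∧ ∀ p ∈ s, δ * w p < c p := by
  rcases s.eq_empty_or_nonempty with rfl | hs
  · exact ⟨1, one_pos, by simp⟩
  · refine ⟨s.inf' hs (fun p => c p / (|w p| + 1)), ?_, ?_⟩
    · rw [Finset.lt_inf'_iff]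
      intro p hp
      have := hc p hp
      positivity
    · intro p hp
      set δ := s.inf' hs (fun p => c p / (|w p| + 1)) with hδ
      have hδpos : 0 < δ := by
        rw [hδ, Finset.lt_inf'_iff]
        intro q hq
        have := hc q hq
        positivity
      have hle : δ ≤ c p / (|w p| + 1) := Finset.inf'_le _ hp
      have habs : 0 < |w p| + 1 := by positivity
      calc δ * w p ≤ δ * |w p| := by
            apply mul_le_mul_of_nonneg_left (le_abs_self _) hδpos.le
        _ < δ * (|w p| + 1) := by nlinarith
        _ ≤ (c p / (|w p| + 1)) * (|w p| + 1) := by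
            apply mul_le_mul_of_nonneg_right hle habs.le
        _ = c p := div_mul_cancel₀ _ habs.ne'

end

def remSet (X : Finset Pt) (H : Set Pt) : Set Pt :=
  {z | z ∈ frontier H ∧ ∀ (f : LF) (a : ℝ), f ≠ 0 → H = {x | f x ≤ a} →
    ∃ p ∈ (↑X : Set Pt) ∩ frontier H, 0 < Jmap f (p - z)}

def psi (X : Finset Pt) (H : Set Pt) : Set Pt := ((↑X : Set Pt) ∩ H) \ remSet X H

lemma psi_eq {X : Finset Pt} {f : LF} {a : ℝ} {p q : Pt} (hf : f ≠ 0)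
    (hfr : (↑X : Set Pt) ∩ frontier {x : Pt | f x ≤ a} = {p, q}) (hpq : p ≠ q)
    (hJ : 0 < Jmap f (p - q)) :
    psi X {x : Pt | f x ≤ a} = ((↑X : Set Pt) ∩ {x : Pt | f x ≤ a}) \ {q} := by
  have hfro := frontier_halfplane f hf a
  have hpmem : p ∈ (↑X : Set Pt) ∩ frontier {x : Pt | f x ≤ a} := by
    rw [hfr]; exact mem_insert _ _
  have hqmem : q ∈ (↑X : Set Pt) ∩ frontier {x : Pt | f x ≤ a} := by
    rw [hfr]; exact mem_insert_of_mem _ rfl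
  ext z
  simp only [psi, mem_diff, mem_inter_iff]
  constructor
  · rintro ⟨⟨hzX, hzH⟩, hzr⟩
    refine ⟨⟨hzX, hzH⟩, ?_⟩
    intro hzq
    rw [mem_singleton_iff] at hzq
    subst hzq
    apply hzr
    refine ⟨hqmem.2, ?_⟩
    intro g b hg hH
    obtain ⟨c, hcpos, hgcf, hbca⟩ := halfplane_rep_unique hf hg hH
    refine ⟨p, hpmem, ?_⟩
    rw [hgcf, Jmap_smul, LinearMap.smul_apply, smul_eq_mul]
    exact mul_pos hcpos hJ
  · rintro ⟨⟨hzX, hzH⟩, hzq⟩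
    rw [mem_singleton_iff] at hzq
    refine ⟨⟨hzX, hzH⟩, ?_⟩
    rintro ⟨hzf, hall⟩
    have hz2 : z = p ∨ z = q := by
      have hz : z ∈ ({p, q} : Set Pt) := by rw [← hfr]; exact ⟨hzX, hzf⟩
      simpa using hz
    rcases hz2 with h | h
    · obtain ⟨p', hp', hJ'⟩ := hall f a hf rfl
      rw [hfr] at hp'
      have hp2 : p' = p ∨ p' = q := by simpa using hp'
      rcases hp2 with h2 | h2
      · rw [h2, h] at hJ'; simp at hJ'
      · rw [h2, h] at hJ'
        have heq : Jmap f (q - p) = -(Jmap f (p - q)) := by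
          rw [← map_neg]; congr 1; abel
        rw [heq] at hJ'
        linarith
    · exact hzq h

/-- structure of a representative halfplane -/
lemma rep_struct {X : Finset Pt} {k : ℕ} {H : Set Pt} (hH : H ∈ repHalfplanes X k) :
    ∃ (f : LF) (a : ℝ) (p q : Pt), f ≠ 0 ∧ H = {x : Pt | f x ≤ a} ∧ p ≠ q ∧
      (↑X : Set Pt) ∩ frontier H = {p, q} ∧ 0 < Jmap f (p - q) ∧
      f p = a ∧ f q = a ∧ psi X H = ((↑X : Set Pt) ∩ H) \ {q} ∧
      ((↑X : Set Pt) ∩ H).ncard = k := by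
  obtain ⟨⟨f, a, hf, rfl⟩, hcard, hfr2⟩ := hH
  obtain ⟨p, q, hpq, hset⟩ := Set.ncard_eq_two.mp hfr2
  have hfro := frontier_halfplane f hf a
  have hfp : f p = a := by
    have : p ∈ (↑X : Set Pt) ∩ frontier {x : Pt | f x ≤ a} := by
      rw [hset]; exact mem_insert _ _
    rw [hfro] at this; exact this.2
  have hfq : f q = a := by
    have : q ∈ (↑X : Set Pt) ∩ frontier {x : Pt | f x ≤ a} := by
      rw [hset]; exact mem_insert_of_mem _ rfl
    rw [hfro] at this; exact this.2
  have hJne : Jmap f (p - q) ≠ 0 := by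
    intro h0
    have h1 : f (p - q) = 0 := by rw [map_sub, hfp, hfq, sub_self]
    have := eq_zero_of_J f hf h1 h0
    exact hpq (by rwa [sub_eq_zero] at this)
  rcases lt_or_gt_of_ne hJne with hneg | hpos
  · refine ⟨f, a, q, p, hf, rfl, hpq.symm, by rw [hset, Set.pair_comm], ?_, hfq, hfp, ?_, hcard⟩
    · have : Jmap f (q - p) = -(Jmap f (p - q)) := by
        rw [← map_neg]; congr 1; abel
      rw [this]; linarith
    · apply psi_eq hf (by rw [hset, Set.pair_comm]) hpq.symm
      have : Jmap f (q - p) = -(Jmap f (p - q)) := by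
        rw [← map_neg]; congr 1; abel
      rw [this]; linarith
  · exact ⟨f, a, p, q, hf, rfl, hpq, hset, hpos, hfp, hfq, psi_eq hf hset hpq hpos, hcard⟩

lemma psi_mem_iSets {X : Finset Pt} {i : ℕ} (hi1 : 1 ≤ i) {H : Set Pt}
    (hH : H ∈ repHalfplanes X (i + 1)) : psi X H ∈ iSets X i := by
  classical
  obtain ⟨f, a, p, q, hf, hHeq, hpq, hfr, hJ, hfp, hfq, hpsi, hcard⟩ := rep_struct hH
  subst hHeq
  set H : Set Pt := {x : Pt | f x ≤ a} with hHdef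
  have hXfin : ((↑X : Set Pt) ∩ H).Finite := X.finite_toSet.inter_of_left H
  have hqmem : q ∈ (↑X : Set Pt) ∩ H := by
    have : q ∈ (↑X : Set Pt) ∩ frontier H := by rw [hfr]; exact mem_insert_of_mem _ rfl
    exact ⟨this.1, by have := this.2; rw [frontier_halfplane f hf a] at this; exact le_of_eq this⟩
  have hpmem : p ∈ (↑X : Set Pt) ∩ H := by
    have : p ∈ (↑X : Set Pt) ∩ frontier H := by rw [hfr]; exact mem_insert _ _
    exact ⟨this.1, by have := this.2; rw [frontier_halfplane f hf a] at this; exact le_of_eq this⟩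
  set Y : Set Pt := ((↑X : Set Pt) ∩ H) \ {q} with hYdef
  have hYsub : Y ⊆ ↑X := fun z hz => hz.1.1
  have hYcard : Y.ncard = i := by
    rw [hYdef, Set.ncard_diff_singleton_of_mem hqmem, hcard]
    omega
  rw [hpsi]
  refine ⟨hYsub, hYcard, ?_⟩
  -- build the separating halfplane
  obtain ⟨δ, hδpos, hδ⟩ := exists_pos_mul_lt'
    ((X ×ˢ X).filter (fun pr => f pr.1 < f pr.2))
    (fun pr => f pr.2 - f pr.1)
    (fun pr => Jmap f pr.2 - Jmap f pr.1)
    (by intro pr hpr; rw [Finset.mem_filter] at hpr; linarith [hpr.2])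
  set f' : LF := f - δ • Jmap f with hf'def
  have hf'app : ∀ x : Pt, f' x = f x - δ * Jmap f x := by
    intro x; simp [hf'def]
  have hsep : ∀ y ∈ Y, ∀ x ∈ (↑X : Set Pt) \ Y, f' y < f' x := by
    intro y hy x hx
    have hyX : y ∈ X := hy.1.1
    have hxX : x ∈ X := hx.1
    have hyH : f y ≤ a := hy.1.2
    rcases lt_or_ge (f y) (f x) with hlt | hge
    · have hmem : (y, x) ∈ (X ×ˢ X).filter (fun pr => f pr.1 < f pr.2) := by
        rw [Finset.mem_filter, Finset.mem_product]; exact ⟨⟨hyX, hxX⟩, hlt⟩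
      have := hδ (y, x) hmem
      simp only at this
      rw [hf'app, hf'app]
      linarith
    · -- then x ∈ H, x ∉ Y forces x = q; and f y = a forces y = p
      have hxq : x = q := by
        by_contra hne
        have hxH : x ∈ H := by
          show f x ≤ a
          exact le_trans hge hyH
        have : x ∈ Y := ⟨⟨hxX, hxH⟩, by simpa using hne⟩
        exact hx.2 this
      have hya : f y = a := le_antisymm hyH (by rw [hxq] at hge; rwa [hfq] at hge)
      have hyp : y = p := by
        have : y ∈ (↑X : Set Pt) ∩ frontier H := by
          rw [frontier_halfplane f hf a]; exact ⟨hyX, hya⟩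
        rw [hfr] at this
        have h2 : y = p ∨ y = q := by simpa using this
        rcases h2 with h | h
        · exact h
        · exact absurd (h ▸ hy.2) (by simp)
      have h3 : 0 < Jmap f y - Jmap f x := by
        have h4 : 0 < Jmap f (y - x) := by rw [hyp, hxq]; exact hJ
        rwa [map_sub] at h4
      have h5 : f x = a := by rw [hxq, hfq]
      rw [hf'app, hf'app, hya, h5]
      nlinarith [mul_pos hδpos h3]
  have hYfin : Y.Finite := hXfin.diff
  have hYne : Y.Nonempty := Set.nonempty_of_ncard_ne_zero (by rw [hYcard]; omega)
  have hCne : ((↑X : Set Pt) \ Y).Nonempty := ⟨q, hqmem.1, by simp [hYdef]⟩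
  have hCfin : ((↑X : Set Pt) \ Y).Finite := X.finite_toSet.diff
  obtain ⟨ymax, hymax, hymaxle⟩ := Set.exists_max_image Y f' hYfin hYne
  obtain ⟨xmin, hxmin, hxminle⟩ := Set.exists_min_image ((↑X : Set Pt) \ Y) f' hCfin hCne
  have hmaxmin : f' ymax < f' xmin := hsep ymax hymax xmin hxmin
  set a' : ℝ := (f' ymax + f' xmin) / 2 with ha'
  have hf'ne : f' ≠ 0 := by
    rw [lf_ne_zero_iff]
    rintro ⟨h0, h1⟩
    have e0' : f' e0 = f e0 - δ * f e1 := by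
      rw [hf'app, Jmap_apply, e0_apply0, e0_apply1]; ring
    have e1' : f' e1 = f e1 + δ * f e0 := by
      rw [hf'app, Jmap_apply, e1_apply0, e1_apply1]; ring
    rw [e0'] at h0; rw [e1'] at h1
    set A := f e0 with hAdef
    set B := f e1 with hBdef
    have hB : B = 0 := by nlinarith [sq_nonneg δ]
    have hA : A = 0 := by nlinarith
    exact (lf_ne_zero_iff f).mp hf ⟨hA, hB⟩
  have ha1 : f' ymax < a' := by rw [ha']; linarith
  have ha2 : a' < f' xmin := by rw [ha']; linarith
  refine ⟨{x : Pt | f' x ≤ a'}, ⟨f', a', hf'ne, rfl⟩, ?_⟩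
  ext z
  simp only [mem_inter_iff, mem_setOf_eq]
  constructor
  · rintro ⟨hzX, hzle⟩
    by_contra hzY
    have := hxminle z ⟨hzX, hzY⟩
    linarith
  · intro hzY
    exact ⟨hYsub hzY, by linarith [hymaxle z hzY]⟩

noncomputable def fθ (θ : ℝ) : LF := lfun (Real.cos θ) (Real.sin θ)

lemma fθ_apply (θ : ℝ) (x : Pt) : fθ θ x = Real.cos θ * x 0 + Real.sin θ * x 1 := rfl

lemma fθ_ne (θ : ℝ) : fθ θ ≠ 0 := by
  rw [lf_ne_zero_iff]
  rintro ⟨h0, h1⟩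
  rw [fθ] at h0 h1
  simp only [lfun_e0, lfun_e1] at h0 h1
  have := Real.sin_sq_add_cos_sq θ
  rw [h0, h1] at this
  norm_num at this

lemma Jmap_fθ_apply (θ : ℝ) (x : Pt) :
    Jmap (fθ θ) x = Real.sin θ * x 0 - Real.cos θ * x 1 := by
  rw [Jmap_apply, fθ]; simp only [lfun_e0, lfun_e1]

lemma fθ_rot (θ θ₀ : ℝ) (v : Pt) :
    fθ θ v = Real.cos (θ - θ₀) * fθ θ₀ v - Real.sin (θ - θ₀) * Jmap (fθ θ₀) v := by
  rw [fθ_apply, fθ_apply, Jmap_fθ_apply, Real.cos_sub, Real.sin_sub]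
  linear_combination (-(Real.cos θ * v 0 + Real.sin θ * v 1)) * Real.sin_sq_add_cos_sq θ₀

lemma fθ_sub_pi (θ : ℝ) (v : Pt) : fθ (θ - Real.pi) v = -(fθ θ v) := by
  rw [fθ_apply, fθ_apply, Real.cos_sub_pi, Real.sin_sub_pi]
  ring

lemma exists_rep {X : Finset Pt}
    (hcol : ∀ p ∈ X, ∀ q ∈ X, ∀ r ∈ X, p ≠ q → p ≠ r → q ≠ r →
      ¬ Collinear ℝ ({p, q, r} : Set Pt))
    {i : ℕ} {Y : Set Pt} (hY : Y ∈ iSets X i) (hi1 : 1 ≤ i) (hilt : i < X.card) :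
    ∃ H ∈ repHalfplanes X (i + 1), psi X H = Y := by
  classical
  obtain ⟨hYX, hYcard, H₀, ⟨g, b, hg, rfl⟩, hX0⟩ := hY
  have hYfin : Y.Finite := X.finite_toSet.subset hYX
  have hYne : Y.Nonempty := Set.nonempty_of_ncard_ne_zero (by rw [hYcard]; omega)
  obtain ⟨y₁, hy₁⟩ := hYne
  have hCne : ∃ x, x ∈ (↑X : Set Pt) \ Y := by
    by_contra h
    push_neg at h
    have hsub : (↑X : Set Pt) ⊆ Y := fun x hx => by
      by_contra hxY; exact h x ⟨hx, hxY⟩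
    have heq : (↑X : Set Pt) = Y := Subset.antisymm hsub hYX
    rw [← heq, Set.ncard_coe_finset] at hYcard
    omega
  obtain ⟨x₁, hx₁⟩ := hCne
  have hyb : ∀ y ∈ Y, g y ≤ b := by
    intro y hy
    have hy' : y ∈ (↑X : Set Pt) ∩ {x : Pt | g x ≤ b} := by rw [hX0]; exact hy
    exact hy'.2
  have hxb : ∀ x ∈ (↑X : Set Pt) \ Y, b < g x := by
    intro x hx
    by_contra hle
    push_neg at hle
    have : x ∈ (↑X : Set Pt) ∩ {x : Pt | g x ≤ b} := ⟨hx.1, hle⟩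
    rw [hX0] at this
    exact hx.2 this
  -- direction θ₁
  set z : ℂ := ⟨g e0, g e1⟩ with hzdef
  have hzne : z ≠ 0 := by
    intro h
    rw [Complex.ext_iff] at h
    exact (lf_ne_zero_iff g).mp hg ⟨h.1, h.2⟩
  set θ₁ := Complex.arg z with hθ₁def
  have hrpos : (0:ℝ) < ‖z‖ := norm_pos_iff.mpr hzne
  have hθ₁app : ∀ w : Pt, fθ θ₁ w = g w / ‖z‖ := by
    intro w
    rw [fθ_apply, hθ₁def, Complex.cos_arg hzne, Complex.sin_arg, apply_decomp g w]
    show z.re / ‖z‖ * w 0 + z.im / ‖z‖ * w 1 = _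
    rw [hzdef]
    field_simp
  have hstrict : ∀ y ∈ Y, ∀ x ∈ (↑X : Set Pt) \ Y, 0 < fθ θ₁ (x - y) := by
    intro y hy x hx
    rw [map_sub, hθ₁app, hθ₁app, div_sub_div_same]
    apply div_pos _ hrpos
    have := hyb y hy
    have := hxb x hx
    linarith
  -- the sSup construction
  set Z : Set ℝ :=
    Icc (θ₁ - Real.pi) θ₁ ∩ ⋃ y ∈ Y, ⋃ x ∈ (↑X : Set Pt) \ Y, {θ : ℝ | fθ θ (x - y) ≤ 0}
    with hZdef
  have hZmem : ∀ θ : ℝ, θ ∈ Z ↔ (θ ∈ Icc (θ₁ - Real.pi) θ₁ ∧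
      ∃ y ∈ Y, ∃ x ∈ (↑X : Set Pt) \ Y, fθ θ (x - y) ≤ 0) := by
    intro θ
    rw [hZdef]
    simp only [mem_inter_iff, mem_iUnion, mem_setOf_eq, exists_prop]
  have hZsub : Z ⊆ Icc (θ₁ - Real.pi) θ₁ := fun θ hθ => hθ.1
  have hZclosed : IsClosed Z := by
    refine isClosed_Icc.inter ?_
    refine Set.Finite.isClosed_biUnion hYfin fun y _ => ?_
    refine Set.Finite.isClosed_biUnion (X.finite_toSet.diff (t := Y)) fun x _ => ?_
    have : {θ : ℝ | fθ θ (x - y) ≤ 0} =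
        {θ : ℝ | Real.cos θ * (x - y) 0 + Real.sin θ * (x - y) 1 ≤ 0} := by
      ext θ; rw [mem_setOf_eq, fθ_apply]; rfl
    rw [this]
    exact isClosed_le
      ((Real.continuous_cos.mul continuous_const).add (Real.continuous_sin.mul continuous_const))
      continuous_const
  have hZne : Z.Nonempty := by
    refine ⟨θ₁ - Real.pi, (hZmem _).mpr ⟨⟨le_refl _, by linarith [Real.pi_pos]⟩,
      y₁, hy₁, x₁, hx₁, ?_⟩⟩
    rw [fθ_sub_pi]
    linarith [hstrict y₁ hy₁ x₁ hx₁]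
  have hZcpt : IsCompact Z := IsCompact.of_isClosed_subset isCompact_Icc hZclosed hZsub
  set θ₀ := sSup Z with hθ₀def
  have hθ₀Z : θ₀ ∈ Z := hZcpt.sSup_mem hZne
  have hθ₀le : θ₀ ≤ θ₁ := (hZsub hθ₀Z).2
  have hθ₀ge : θ₁ - Real.pi ≤ θ₀ := (hZsub hθ₀Z).1
  have hbdd : BddAbove Z := ⟨θ₁, fun t ht => (hZsub ht).2⟩
  have hθ₀lt : θ₀ < θ₁ := by
    rcases lt_or_eq_of_le hθ₀le with h | h
    · exact h
    · exfalso
      obtain ⟨_, y, hy, x, hx, hle⟩ := (hZmem _).mp hθ₀Z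
      rw [h] at hle
      linarith [hstrict y hy x hx]
  have hge0 : ∀ y ∈ Y, ∀ x ∈ (↑X : Set Pt) \ Y, 0 ≤ fθ θ₀ (x - y) := by
    intro y hy x hx
    by_contra hneg
    push_neg at hneg
    have hcont : ContinuousOn (fun θ => fθ θ (x - y)) (Icc θ₀ θ₁) := by
      have : (fun θ => fθ θ (x - y)) =
          fun θ => Real.cos θ * (x - y) 0 + Real.sin θ * (x - y) 1 := by
        funext θ; rw [fθ_apply]
      rw [this]
      exact ((Real.continuous_cos.mul continuous_const).add
        (Real.continuous_sin.mul continuous_const)).continuousOn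
    have h0mem : (0:ℝ) ∈ Icc (fθ θ₀ (x - y)) (fθ θ₁ (x - y)) :=
      ⟨hneg.le, (hstrict y hy x hx).le⟩
    obtain ⟨θ', hθ'mem, hθ'eq⟩ := intermediate_value_Icc hθ₀le hcont h0mem
    have hθ'eq' : fθ θ' (x - y) = 0 := hθ'eq
    have hθ'Z : θ' ∈ Z := (hZmem _).mpr
      ⟨⟨le_trans hθ₀ge hθ'mem.1, hθ'mem.2⟩, y, hy, x, hx, le_of_eq hθ'eq'⟩
    have h1 : θ' ≤ θ₀ := le_csSup hbdd hθ'Z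
    have h2 : θ' ≠ θ₀ := by
      intro h
      rw [h] at hθ'eq'
      rw [hθ'eq'] at hneg
      exact lt_irrefl _ hneg
    exact h2 (le_antisymm h1 hθ'mem.1)
  obtain ⟨_, y₀, hy₀, x₀, hx₀, hle0⟩ := (hZmem _).mp hθ₀Z
  have heq0 : fθ θ₀ (x₀ - y₀) = 0 := le_antisymm hle0 (hge0 y₀ hy₀ x₀ hx₀)
  set fu := fθ θ₀ with hfudef
  have hfune : fu ≠ 0 := fθ_ne θ₀
  set a := fu x₀ with hadef
  have hfuy₀ : fu y₀ = a := by
    have h := heq0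
    rw [map_sub] at h
    rw [hadef]; linarith
  have hyx : y₀ ≠ x₀ := fun h => hx₀.2 (h ▸ hy₀)
  have hy₀X : y₀ ∈ (↑X : Set Pt) := hYX hy₀
  have hfro := frontier_halfplane fu hfune a
  have hfr : (↑X : Set Pt) ∩ frontier {x : Pt | fu x ≤ a} = {y₀, x₀} := by
    rw [hfro]
    ext w
    simp only [mem_inter_iff, mem_setOf_eq, mem_insert_iff, mem_singleton_iff]
    constructor
    · rintro ⟨hwX, hwa⟩
      by_contra hcon
      push_neg at hcon
      refine hcol y₀ (Finset.mem_coe.mp hy₀X) x₀ (Finset.mem_coe.mp hx₀.1) w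
        (Finset.mem_coe.mp hwX) hyx (Ne.symm hcon.1) (Ne.symm hcon.2) ?_
      exact collinear_of_f_eq fu hfune a hfuy₀ rfl hwa
    · rintro (rfl | rfl)
      · exact ⟨hy₀X, hfuy₀⟩
      · exact ⟨hx₀.1, rfl⟩
  have hXH : (↑X : Set Pt) ∩ {x : Pt | fu x ≤ a} = insert x₀ Y := by
    ext w
    simp only [mem_inter_iff, mem_setOf_eq, mem_insert_iff]
    constructor
    · rintro ⟨hwX, hwle⟩
      by_cases hwY : w ∈ Y
      · right; exact hwY
      · left
        have hge := hge0 y₀ hy₀ w ⟨hwX, hwY⟩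
        rw [map_sub] at hge
        have hwa : fu w = a := le_antisymm hwle (by rw [← hfuy₀]; linarith)
        have hwline : w ∈ ({y₀, x₀} : Set Pt) := by
          rw [← hfr, hfro]; exact ⟨hwX, hwa⟩
        rcases hwline with h | h
        · exact absurd (h ▸ hwY) (by simp [hy₀])
        · exact h
    · rintro (rfl | hwY)
      · exact ⟨hx₀.1, le_refl a⟩
      · refine ⟨hYX hwY, ?_⟩
        have h := hge0 w hwY x₀ hx₀
        rw [map_sub] at h
        show fu w ≤ a
        rw [hadef]; linarith
  have hx₀Y : x₀ ∉ Y := hx₀.2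
  have hcard1 : ((↑X : Set Pt) ∩ {x : Pt | fu x ≤ a}).ncard = i + 1 := by
    rw [hXH, Set.ncard_insert_of_notMem hx₀Y hYfin, hYcard]
  have hcard2 : ((↑X : Set Pt) ∩ frontier {x : Pt | fu x ≤ a}).ncard = 2 := by
    rw [hfr]
    exact Set.ncard_pair hyx
  have hd : 0 < Jmap fu (y₀ - x₀) := by
    set d := Jmap fu (y₀ - x₀) with hddef
    have hneg : Jmap fu (x₀ - y₀) = -d := by
      rw [hddef, ← map_neg]; congr 1; abel
    have hrot : fθ θ₁ (x₀ - y₀) = Real.sin (θ₁ - θ₀) * d := by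
      rw [fθ_rot θ₁ θ₀ (x₀ - y₀), heq0,
        show Jmap (fθ θ₀) (x₀ - y₀) = -d from hneg]
      ring
    have hpos := hstrict y₀ hy₀ x₀ hx₀
    rw [hrot] at hpos
    have hΔ1 : 0 < θ₁ - θ₀ := by linarith
    have hΔ2 : θ₁ - θ₀ ≤ Real.pi := by linarith
    rcases eq_or_lt_of_le hΔ2 with heqπ | hltπ
    · rw [heqπ, Real.sin_pi] at hpos; linarith
    · have hsinpos := Real.sin_pos_of_pos_of_lt_pi hΔ1 hltπ
      by_contra hdle
      push_neg at hdle
      nlinarith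
  refine ⟨{x : Pt | fu x ≤ a}, ⟨⟨fu, a, hfune, rfl⟩, hcard1, hcard2⟩, ?_⟩
  rw [psi_eq hfune hfr hyx hd, hXH]
  ext w
  simp only [mem_diff, mem_insert_iff, mem_singleton_iff]
  constructor
  · rintro ⟨h1 | h1, h2⟩
    · exact absurd h1 h2
    · exact h1
  · intro hw
    exact ⟨Or.inr hw, fun h => hx₀Y (h ▸ hw)⟩

lemma exists_decomp (f : LF) (hf : f ≠ 0) (g : LF) : ∃ s t : ℝ, g = s • f + t • Jmap f := by
  have hR := sumsq_pos f hf
  refine ⟨(f e0 * g e0 + f e1 * g e1) / (f e0 ^ 2 + f e1 ^ 2),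
          (f e1 * g e0 - f e0 * g e1) / (f e0 ^ 2 + f e1 ^ 2), ?_⟩
  apply lf_ext
  · simp only [LinearMap.add_apply, LinearMap.smul_apply, smul_eq_mul, Jmap_e0]
    field_simp
    ring
  · simp only [LinearMap.add_apply, LinearMap.smul_apply, smul_eq_mul, Jmap_e1]
    field_simp
    ring

lemma Jmap_comb (f : LF) (s t : ℝ) :
    Jmap (s • f + t • Jmap f) = s • Jmap f - t • f := by
  apply lf_ext <;>
    simp only [Jmap_e0, Jmap_e1, LinearMap.add_apply, LinearMap.sub_apply,
      LinearMap.smul_apply, smul_eq_mul] <;> ring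

lemma psi_inj {X : Finset Pt}
    (hcol : ∀ p ∈ X, ∀ q ∈ X, ∀ r ∈ X, p ≠ q → p ≠ r → q ≠ r →
      ¬ Collinear ℝ ({p, q, r} : Set Pt))
    {k : ℕ} {H₁ H₂ : Set Pt}
    (h₁ : H₁ ∈ repHalfplanes X k) (h₂ : H₂ ∈ repHalfplanes X k)
    (hps : psi X H₁ = psi X H₂) : H₁ = H₂ := by
  obtain ⟨f₁, a₁, p₁, q₁, hf₁, hH₁, hpq₁, hfr₁, hJ₁, hfp₁, hfq₁, hpsi₁, hcard₁⟩ := rep_struct h₁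
  obtain ⟨f₂, a₂, p₂, q₂, hf₂, hH₂, hpq₂, hfr₂, hJ₂, hfp₂, hfq₂, hpsi₂, hcard₂⟩ := rep_struct h₂
  subst hH₁
  subst hH₂
  set Y := ((↑X : Set Pt) ∩ {x : Pt | f₁ x ≤ a₁}) \ {q₁} with hYdef
  have hYeq : ((↑X : Set Pt) ∩ {x : Pt | f₂ x ≤ a₂}) \ {q₂} = Y := by
    rw [← hpsi₁, ← hpsi₂, hps]
  have hp₁X : p₁ ∈ (↑X : Set Pt) := by
    have : p₁ ∈ (↑X : Set Pt) ∩ frontier {x : Pt | f₁ x ≤ a₁} := by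
      rw [hfr₁]; exact mem_insert _ _
    exact this.1
  have hq₁X : q₁ ∈ (↑X : Set Pt) := by
    have : q₁ ∈ (↑X : Set Pt) ∩ frontier {x : Pt | f₁ x ≤ a₁} := by
      rw [hfr₁]; exact mem_insert_of_mem _ rfl
    exact this.1
  have hp₂X : p₂ ∈ (↑X : Set Pt) := by
    have : p₂ ∈ (↑X : Set Pt) ∩ frontier {x : Pt | f₂ x ≤ a₂} := by
      rw [hfr₂]; exact mem_insert _ _
    exact this.1
  have hq₂X : q₂ ∈ (↑X : Set Pt) := by
    have : q₂ ∈ (↑X : Set Pt) ∩ frontier {x : Pt | f₂ x ≤ a₂} := by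
      rw [hfr₂]; exact mem_insert_of_mem _ rfl
    exact this.1
  have hp₁Y : p₁ ∈ Y := ⟨⟨hp₁X, le_of_eq hfp₁⟩, by simpa using hpq₁⟩
  have hq₁Y : q₁ ∉ Y := by rw [hYdef]; simp
  have hp₂Y : p₂ ∈ Y := by
    rw [← hYeq]; exact ⟨⟨hp₂X, le_of_eq hfp₂⟩, by simpa using hpq₂⟩
  have hq₂Y : q₂ ∉ Y := by rw [← hYeq]; simp
  have hf₁le : ∀ y ∈ Y, f₁ y ≤ a₁ := fun y hy => hy.1.2
  have hf₂le : ∀ y ∈ Y, f₂ y ≤ a₂ := fun y hy => by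
    rw [← hYeq] at hy; exact hy.1.2
  have hf₁ge : ∀ x, x ∈ (↑X : Set Pt) → x ∉ Y → a₁ ≤ f₁ x := by
    intro x hxX hxY
    by_cases h : x = q₁
    · rw [h, hfq₁]
    · by_contra hlt
      push_neg at hlt
      exact hxY ⟨⟨hxX, hlt.le⟩, by simpa using h⟩
  have hf₂ge : ∀ x, x ∈ (↑X : Set Pt) → x ∉ Y → a₂ ≤ f₂ x := by
    intro x hxX hxY
    rw [← hYeq] at hxY
    by_cases h : x = q₂
    · rw [h, hfq₂]
    · by_contra hlt
      push_neg at hlt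
      exact hxY ⟨⟨hxX, hlt.le⟩, by simpa using h⟩
  -- strictness on the frontier: a frontier value forces membership in the two-point set
  have hfr₁' : ∀ x, x ∈ (↑X : Set Pt) → f₁ x = a₁ → x = p₁ ∨ x = q₁ := by
    intro x hxX hxa
    have : x ∈ (↑X : Set Pt) ∩ frontier {x : Pt | f₁ x ≤ a₁} := by
      rw [frontier_halfplane f₁ hf₁ a₁]; exact ⟨hxX, hxa⟩
    rw [hfr₁] at this
    simpa using this
  have hfr₂' : ∀ x, x ∈ (↑X : Set Pt) → f₂ x = a₂ → x = p₂ ∨ x = q₂ := by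
    intro x hxX hxa
    have : x ∈ (↑X : Set Pt) ∩ frontier {x : Pt | f₂ x ≤ a₂} := by
      rw [frontier_halfplane f₂ hf₂ a₂]; exact ⟨hxX, hxa⟩
    rw [hfr₂] at this
    simpa using this
  obtain ⟨s, t, hst⟩ := exists_decomp f₁ hf₁ f₂
  have hv₁ : f₁ (p₁ - q₁) = 0 := by rw [map_sub, hfp₁, hfq₁, sub_self]
  have hv₂ : f₂ (p₂ - q₂) = 0 := by rw [map_sub, hfp₂, hfq₂, sub_self]
  have hu₁ : f₁ (p₂ - q₂) ≤ 0 := by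
    rw [map_sub]
    have h1 := hf₁le p₂ hp₂Y
    have h2 := hf₁ge q₂ hq₂X hq₂Y
    linarith
  have htd : f₂ (p₁ - q₁) ≤ 0 := by
    rw [map_sub]
    have h1 := hf₂le p₁ hp₁Y
    have h2 := hf₂ge q₁ hq₁X hq₁Y
    linarith
  have ht1 : f₂ (p₁ - q₁) = t * Jmap f₁ (p₁ - q₁) := by
    rw [hst]
    simp only [LinearMap.add_apply, LinearMap.smul_apply, smul_eq_mul, hv₁, mul_zero, zero_add]
  have htle : t ≤ 0 := by
    rw [ht1] at htd
    by_contra h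
    push_neg at h
    nlinarith
  set u₁ := f₁ (p₂ - q₂) with hu₁def
  set w₁ := Jmap f₁ (p₂ - q₂) with hw₁def
  have heqA : s * u₁ + t * w₁ = 0 := by
    have h := hv₂
    rw [hst] at h
    simpa only [LinearMap.add_apply, LinearMap.smul_apply, smul_eq_mul] using h
  have heqB : 0 < s * w₁ - t * u₁ := by
    have h := hJ₂
    rw [hst, Jmap_comb] at h
    simpa only [LinearMap.sub_apply, LinearMap.smul_apply, smul_eq_mul] using h
  have ht0 : t = 0 := by
    by_contra h
    have htneg : t < 0 := lt_of_le_of_ne htle h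
    have key : t * (s * w₁ - t * u₁) = s * (s * u₁ + t * w₁) - (s ^ 2 + t ^ 2) * u₁ := by ring
    rw [heqA, mul_zero, zero_sub] at key
    have k1 : t * (s * w₁ - t * u₁) < 0 := mul_neg_of_neg_of_pos htneg heqB
    have k2 : 0 ≤ -((s ^ 2 + t ^ 2) * u₁) := by
      have : 0 ≤ (s ^ 2 + t ^ 2) * (-u₁) :=
        mul_nonneg (by positivity) (by linarith)
      linarith [this]
    linarith [key ▸ k1]
  have hf₂s : f₂ = s • f₁ := by rw [hst, ht0, zero_smul, add_zero]
  have hsne : s ≠ 0 := by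
    intro h
    rw [h, zero_smul] at hf₂s
    exact hf₂ hf₂s
  have happ : ∀ x : Pt, f₂ x = s * f₁ x := by
    intro x; rw [hf₂s]; simp [smul_eq_mul]
  rcases lt_or_gt_of_ne hsne with hsneg | hspos
  · exfalso
    have hall : ∀ y ∈ Y, ∀ x, x ∈ (↑X : Set Pt) → x ∉ Y → f₁ y = a₁ ∧ f₁ x = a₁ := by
      intro y hy x hxX hxY
      have h1 := hf₁le y hy
      have h2 := hf₁ge x hxX hxY
      have h3 := hf₂le y hy
      have h4 := hf₂ge x hxX hxY
      rw [happ] at h3 h4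
      constructor <;> nlinarith
    by_cases hY2 : ∃ y ∈ Y, y ≠ p₁
    · obtain ⟨y', hy', hne⟩ := hY2
      have h1 := hall y' hy' q₁ hq₁X hq₁Y
      have h2 := hall p₁ hp₁Y q₁ hq₁X hq₁Y
      refine hcol y' (Finset.mem_coe.mp hy'.1.1) p₁ (Finset.mem_coe.mp hp₁X)
        q₁ (Finset.mem_coe.mp hq₁X) hne (fun h => hq₁Y (h ▸ hy')) hpq₁ ?_
      exact collinear_of_f_eq f₁ hf₁ a₁ h1.1 h2.1 hfq₁
    · push_neg at hY2
      by_cases hX2 : ∃ x, x ∈ (↑X : Set Pt) ∧ x ∉ Y ∧ x ≠ q₁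
      · obtain ⟨x', hx'X, hx'Y, hx'ne⟩ := hX2
        have h1 := hall p₁ hp₁Y x' hx'X hx'Y
        refine hcol p₁ (Finset.mem_coe.mp hp₁X) q₁ (Finset.mem_coe.mp hq₁X) x'
          (Finset.mem_coe.mp hx'X) hpq₁ (fun h => hx'Y (h ▸ hp₁Y)) (Ne.symm hx'ne) ?_
        exact collinear_of_f_eq f₁ hf₁ a₁ hfp₁ hfq₁ h1.2
      · push_neg at hX2
        have hp₂p₁ : p₂ = p₁ := hY2 p₂ hp₂Y
        have hq₂q₁ : q₂ = q₁ := hX2 q₂ hq₂X hq₂Y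
        have hd2 : Jmap f₂ (p₂ - q₂) = s * Jmap f₁ (p₁ - q₁) := by
          rw [hp₂p₁, hq₂q₁, hf₂s, Jmap_smul]
          simp [smul_eq_mul]
        rw [hd2] at hJ₂
        nlinarith
  · -- s > 0
    have hqq : q₁ = q₂ := by
      by_contra hne
      have h1 : a₁ < f₁ q₂ := by
        rcases lt_or_eq_of_le (hf₁ge q₂ hq₂X hq₂Y) with h | h
        · exact h
        · exfalso
          rcases hfr₁' q₂ hq₂X h.symm with h' | h'
          · exact hq₂Y (h' ▸ hp₁Y)
          · exact hne h'.symm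
      have h2 : a₂ < f₂ q₁ := by
        rcases lt_or_eq_of_le (hf₂ge q₁ hq₁X hq₁Y) with h | h
        · exact h
        · exfalso
          rcases hfr₂' q₁ hq₁X h.symm with h' | h'
          · exact hq₁Y (h' ▸ hp₂Y)
          · exact hne h'
      have e1 : f₂ q₂ = s * f₁ q₂ := happ q₂
      have e2 : f₂ q₁ = s * f₁ q₁ := happ q₁
      rw [hfq₂] at e1
      rw [hfq₁] at e2
      nlinarith
    have ha₂ : a₂ = s * a₁ := by
      rw [← hfq₂, ← hqq, happ q₁, hfq₁]
    ext x
    simp only [mem_setOf_eq]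
    rw [happ x, ha₂]
    constructor
    · intro h
      exact (mul_le_mul_iff_right₀ hspos).mpr h
    · intro h
      exact (mul_le_mul_iff_right₀ hspos).mp h

/-- for `X` with no three points collinear and `1 ≤ i ≤ n−1`, the
number of `i`-sets of `X` equals the number of representative halfplanes of
`(i+1)`-sets, i.e. `aᵢ = |𝒜_{i+1}|`. -/
theorem iSets_card_eq_repHalfplanes_card
    (X : Finset Pt)
    (hcol : ∀ p ∈ X, ∀ q ∈ X, ∀ r ∈ X, p ≠ q → p ≠ r → q ≠ r →
      ¬ Collinear ℝ ({p, q, r} : Set Pt))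
    (i : ℕ) (hi1 : 1 ≤ i) (hi2 : i ≤ X.card - 1) :
    (iSets X i).ncard = (repHalfplanes X (i + 1)).ncard := by
  have himg : psi X '' repHalfplanes X (i + 1) = iSets X i := by
    apply Set.Subset.antisymm
    · rintro _ ⟨H, hH, rfl⟩
      exact psi_mem_iSets hi1 hH
    · intro Y hY
      obtain ⟨H, hH, hpsi⟩ := exists_rep hcol hY hi1 (by omega)
      exact ⟨H, hH, hpsi⟩
  rw [← himg, Set.ncard_image_of_injOn (fun H₁ h₁ H₂ h₂ h => psi_inj hcol h₁ h₂ h)]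
end
end

section
/- Let X ⊆ ℝ² be a set of n points, no three of which are collinear, let 1 ≤ i ≤ n−1, and let Y ⊆ X be an i-set of X. Then there exist a closed halfplane H and a point p ∈ X∖Y such that X ∩ H = Y ∪ {p}, exactly two points of X lie on the boundary line of H, and one of these two boundary points is p while the other belongs to Y. -/
open Set

noncomputable section

open scoped RealInnerProductSpace in
/-- All points of a level set of a nonzero linear functional on the plane are collinear. -/
lemma collinear_level_set (f : Pt →ₗ[ℝ] ℝ) (hf : f ≠ 0) (a : ℝ) :
    Collinear ℝ {x : Pt | f x = a} := by
  rcases Set.eq_empty_or_nonempty {x : Pt | f x = a} with h | ⟨p₀, hp₀⟩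
  · rw [h]; exact collinear_empty ℝ _
  have hsurj : Function.Surjective f := by
    obtain ⟨x, hx⟩ : ∃ x, f x ≠ 0 := by
      by_contra h'
      push_neg at h'
      exact hf (LinearMap.ext fun x => h' x)
    intro c
    exact ⟨(c / f x) • x, by rw [map_smul, smul_eq_mul, div_mul_cancel₀ c hx]⟩
  have hrange : LinearMap.range f = ⊤ := LinearMap.range_eq_top.2 hsurj
  have hker : Module.finrank ℝ (LinearMap.ker f) = 1 := by
    have h1 := LinearMap.finrank_range_add_finrank_ker f
    rw [hrange] at h1
    simp only [finrank_top, Module.finrank_self] at h1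
    have h2 : Module.finrank ℝ Pt = 2 := finrank_euclideanSpace_fin
    omega
  obtain ⟨v, hv0, hvspan⟩ := finrank_eq_one_iff'.mp hker
  rw [collinear_iff_of_mem hp₀]
  refine ⟨(v : Pt), fun p hp => ?_⟩
  have hmem : p - p₀ ∈ LinearMap.ker f := by
    simp only [LinearMap.mem_ker, map_sub]
    rw [Set.mem_setOf_eq] at hp hp₀
    rw [hp, hp₀, sub_self]
  obtain ⟨c, hc⟩ := hvspan ⟨p - p₀, hmem⟩
  refine ⟨c, ?_⟩
  have hc' : c • (v : Pt) = p - p₀ := congrArg Subtype.val hc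
  simp only [vadd_eq_add]
  rw [hc']
  abel

open scoped RealInnerProductSpace in
/-- The frontier of a halfplane determined by a unit inner-product functional. -/
lemma frontier_inner_halfplane (u : Pt) (hu : ‖u‖ = 1) (a : ℝ) :
    frontier {x : Pt | ⟪u, x⟫ ≤ a} = {x : Pt | ⟪u, x⟫ = a} := by
  have hcont : Continuous fun x : Pt => ⟪u, x⟫ := continuous_const.inner continuous_id
  have hclosed : IsClosed {x : Pt | ⟪u, x⟫ ≤ a} :=
    isClosed_le hcont continuous_const
  have hint : interior {x : Pt | ⟪u, x⟫ ≤ a} = {x : Pt | ⟪u, x⟫ < a} := by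
    apply Subset.antisymm
    · intro x hx
      obtain ⟨ε, hε, hball⟩ := Metric.isOpen_iff.1 isOpen_interior x hx
      by_contra hlt
      simp only [Set.mem_setOf_eq, not_lt] at hlt
      have hx2 : ⟪u, x⟫ ≤ a := by simpa using interior_subset hx
      have hxa : ⟪u, x⟫ = a := le_antisymm hx2 hlt
      have hmem : x + (ε / 2) • u ∈ Metric.ball x ε := by
        simp only [Metric.mem_ball, dist_eq_norm]
        rw [add_sub_cancel_left, norm_smul, hu]
        simp only [mul_one, Real.norm_eq_abs, abs_of_pos (by linarith : (0:ℝ) < ε / 2)]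
        linarith
      have : ⟪u, x + (ε / 2) • u⟫ ≤ a := by simpa using interior_subset (hball hmem)
      rw [inner_add_right, real_inner_smul_right, real_inner_self_eq_norm_sq, hu, hxa] at this
      nlinarith
    · intro x hx
      exact mem_interior_iff_mem_nhds.2 <|
        Filter.mem_of_superset ((isOpen_lt hcont continuous_const).mem_nhds hx)
          (by intro y hy; simp only [Set.mem_setOf_eq] at hy ⊢; exact le_of_lt hy)
  rw [frontier, hclosed.closure_eq, hint]
  ext x
  simp only [Set.mem_diff, Set.mem_setOf_eq, not_lt]
  constructor
  · rintro ⟨h1, h2⟩; exact le_antisymm h1 h2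
  · intro h; exact ⟨le_of_eq h, ge_of_eq h⟩

open scoped InnerProductSpace

/-- every `i`-set `Y` of `X` has a representative halfplane: a closed
halfplane `H` and a point `p ∈ X∖Y` with `X ∩ H = Y ∪ {p}` and exactly two points
of `X` on the boundary line of `H`, one being `p` and the other belonging to `Y`. -/
theorem exists_representative_halfplane
    (X : Finset Pt)
    (hcol : ∀ p ∈ X, ∀ q ∈ X, ∀ r ∈ X, p ≠ q → p ≠ r → q ≠ r →
      ¬ Collinear ℝ ({p, q, r} : Set Pt))
    (i : ℕ) (hi1 : 1 ≤ i) (hi2 : i ≤ X.card - 1)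
    (Y : Set Pt) (hYX : Y ⊆ ↑X) (hYi : Y.ncard = i)
    (hsep : ∃ H₀ : Set Pt, IsClosedHalfplane H₀ ∧ ↑X ∩ H₀ = Y) :
    ∃ (H : Set Pt) (p : Pt), IsClosedHalfplane H ∧ p ∈ (↑X : Set Pt) \ Y ∧
      ↑X ∩ H = Y ∪ {p} ∧ ∃ q ∈ Y, (↑X : Set Pt) ∩ frontier H = {p, q} := by
  classical
  obtain ⟨H₀, ⟨f₀, a₀, hf₀, hH₀⟩, hXH₀⟩ := hsep
  -- finsets for Y and its complement Z in X
  have hYfin : Y.Finite := X.finite_toSet.subset hYX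
  set Yf : Finset Pt := hYfin.toFinset with hYfdef
  have hYfcoe : (↑Yf : Set Pt) = Y := hYfin.coe_toFinset
  have hYfsub : Yf ⊆ X := by
    intro y hy
    have : y ∈ Y := by rw [← hYfcoe]; exact_mod_cast hy
    exact_mod_cast hYX this
  set Zf : Finset Pt := X \ Yf with hZfdef
  have hYfcard : Yf.card = i := by
    rw [← hYi, ← hYfcoe, Set.ncard_coe_finset]
  have hYne : Yf.Nonempty := by
    rw [← Finset.card_pos, hYfcard]; omega
  have hZne : Zf.Nonempty := by
    rw [← Finset.card_pos, hZfdef, Finset.card_sdiff_of_subset hYfsub, hYfcard]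
    omega
  have hZmem : ∀ z ∈ Zf, z ∈ X ∧ z ∉ Y := by
    intro z hz
    rw [hZfdef, Finset.mem_sdiff] at hz
    refine ⟨hz.1, fun hzy => hz.2 ?_⟩
    rw [← hYfcoe] at hzy; exact_mod_cast hzy
  -- separation facts for the initial halfplane
  have hYle : ∀ y ∈ Yf, f₀ y ≤ a₀ := by
    intro y hy
    have hyY : y ∈ Y := by rw [← hYfcoe]; exact_mod_cast hy
    have : y ∈ (↑X : Set Pt) ∩ H₀ := hXH₀ ▸ hyY
    have := this.2
    rw [hH₀] at this; exact this
  have hZgt : ∀ z ∈ Zf, a₀ < f₀ z := by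
    intro z hz
    obtain ⟨hzX, hzY⟩ := hZmem z hz
    by_contra hle
    push_neg at hle
    exact hzY (hXH₀ ▸ ⟨(by exact_mod_cast hzX), by rw [hH₀]; exact hle⟩)
  -- the vector representing f₀
  set f₀c : Pt →L[ℝ] ℝ := LinearMap.toContinuousLinearMap f₀ with hf₀c
  set v : Pt := (InnerProductSpace.toDual ℝ Pt).symm f₀c with hvdef
  have hvinner : ∀ x : Pt, ⟪v, x⟫_ℝ = f₀ x := fun x =>
    InnerProductSpace.toDual_symm_apply
  have hv0 : v ≠ 0 := by
    intro h
    apply hf₀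
    ext x
    have := hvinner x
    rw [h] at this
    simpa using this.symm
  have hvnorm : (0:ℝ) < ‖v‖ := norm_pos_iff.2 hv0
  set u₀ : Pt := ‖v‖⁻¹ • v with hu₀def
  have hu₀norm : ‖u₀‖ = 1 := by
    rw [hu₀def, norm_smul, norm_inv, norm_norm, inv_mul_cancel₀ hvnorm.ne']
  have hu₀inner : ∀ x : Pt, ⟪x, u₀⟫_ℝ = ‖v‖⁻¹ * f₀ x := by
    intro x
    rw [hu₀def, real_inner_smul_right, real_inner_comm, hvinner]
  -- the function g on directions
  set g : Pt → ℝ := fun w =>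
    (Zf.inf' hZne fun z => ⟪z, w⟫_ℝ) - (Yf.sup' hYne fun y => ⟪y, w⟫_ℝ) with hgdef
  have hgcont : Continuous g := by
    apply Continuous.sub
    · exact Continuous.finset_inf'_apply hZne fun z _ => (innerSL ℝ z).continuous
    · exact Continuous.finset_sup'_apply hYne fun y _ => (innerSL ℝ y).continuous
  -- g is positive at u₀
  have hgu₀ : 0 < g u₀ := by
    obtain ⟨z₀, hz₀, hz₀eq⟩ := Zf.exists_mem_eq_inf' hZne fun z => ⟪z, u₀⟫_ℝ
    have hsup : (Yf.sup' hYne fun y => ⟪y, u₀⟫_ℝ) ≤ ‖v‖⁻¹ * a₀ := by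
      apply Finset.sup'_le
      intro y hy
      rw [hu₀inner]
      exact mul_le_mul_of_nonneg_left (hYle y hy) (by positivity)
    have hinf : ‖v‖⁻¹ * a₀ < Zf.inf' hZne fun z => ⟪z, u₀⟫_ℝ := by
      rw [hz₀eq, hu₀inner]
      exact (mul_lt_mul_iff_right₀ (by positivity)).2 (hZgt z₀ hz₀)
    rw [hgdef]
    dsimp only
    linarith
  -- g is negative at -u₀
  have hgu₀' : g (-u₀) < 0 := by
    obtain ⟨y', hy'⟩ := id hYne
    obtain ⟨z', hz'⟩ := id hZne
    have h1 : (Zf.inf' hZne fun z => ⟪z, -u₀⟫_ℝ) ≤ ⟪z', -u₀⟫_ℝ :=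
      Finset.inf'_le _ hz'
    have h2 : ⟪y', -u₀⟫_ℝ ≤ Yf.sup' hYne fun y => ⟪y, -u₀⟫_ℝ :=
      Finset.le_sup' (fun y => ⟪y, -u₀⟫_ℝ) hy'
    have h3 : ⟪z', -u₀⟫_ℝ < ⟪y', -u₀⟫_ℝ := by
      rw [inner_neg_right, inner_neg_right, hu₀inner, hu₀inner, neg_lt_neg_iff]
      have := hZgt z' hz'
      have := hYle y' hy'
      have : f₀ y' < f₀ z' := by linarith
      exact (mul_lt_mul_iff_right₀ (by positivity)).2 (by linarith)
    rw [hgdef]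
    dsimp only
    linarith
  -- sphere is connected, intermediate value
  have hrank : 1 < Module.rank ℝ Pt := by
    rw [← Module.finrank_eq_rank, finrank_euclideanSpace_fin]
    exact_mod_cast one_lt_two
  have hconn : IsPreconnected (Metric.sphere (0:Pt) 1) :=
    (isConnected_sphere hrank (0:Pt) zero_le_one).isPreconnected
  have hu₀mem : u₀ ∈ Metric.sphere (0:Pt) 1 := by
    rw [mem_sphere_zero_iff_norm]; exact hu₀norm
  have hu₀mem' : -u₀ ∈ Metric.sphere (0:Pt) 1 := by
    rw [mem_sphere_zero_iff_norm, norm_neg]; exact hu₀norm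
  obtain ⟨u, humem, hgu⟩ :=
    hconn.intermediate_value₂ hu₀mem' hu₀mem hgcont.continuousOn
      continuousOn_const (le_of_lt hgu₀') (le_of_lt hgu₀)
  have hunorm : ‖u‖ = 1 := mem_sphere_zero_iff_norm.1 humem
  -- the level a
  set a : ℝ := Yf.sup' hYne fun y => ⟪y, u⟫_ℝ with hadef
  have hinfa : (Zf.inf' hZne fun z => ⟪z, u⟫_ℝ) = a := by
    have : g u = 0 := hgu
    rw [hgdef] at this
    dsimp only at this
    linarith [this]
  -- key inequalities
  have hYlea : ∀ y ∈ Y, ⟪u, y⟫_ℝ ≤ a := by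
    intro y hy
    rw [real_inner_comm, hadef]
    refine Finset.le_sup' (fun y => ⟪y, u⟫_ℝ) ?_
    rw [← hYfcoe] at hy; exact_mod_cast hy
  have hZgea : ∀ z ∈ Zf, a ≤ ⟪u, z⟫_ℝ := by
    intro z hz
    rw [real_inner_comm, ← hinfa]
    exact Finset.inf'_le _ hz
  -- the witnesses p and q
  obtain ⟨p, hpZ, hpeq⟩ := Zf.exists_mem_eq_inf' hZne fun z => ⟪z, u⟫_ℝ
  obtain ⟨q, hqY, hqeq⟩ := Yf.exists_mem_eq_sup' hYne fun y => ⟪y, u⟫_ℝ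
  have hpa : ⟪u, p⟫_ℝ = a := by rw [real_inner_comm, ← hpeq, hinfa]
  have hqa : ⟪u, q⟫_ℝ = a := by rw [real_inner_comm, ← hqeq, ← hadef]
  have hpX : p ∈ X := (hZmem p hpZ).1
  have hpY : p ∉ Y := (hZmem p hpZ).2
  have hqYY : q ∈ Y := by rw [← hYfcoe]; exact_mod_cast hqY
  have hqX : q ∈ X := hYX hqYY
  have hpq : p ≠ q := fun h => hpY (h ▸ hqYY)
  -- the halfplane
  set fL : Pt →ₗ[ℝ] ℝ := (innerSL ℝ u).toLinearMap with hfLdef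
  have hfLapp : ∀ x : Pt, fL x = ⟪u, x⟫_ℝ := fun x => rfl
  have hfL0 : fL ≠ 0 := by
    intro h
    have : fL u = 0 := by rw [h]; rfl
    rw [hfLapp, real_inner_self_eq_norm_sq, hunorm] at this
    norm_num at this
  set H : Set Pt := {x | ⟪u, x⟫_ℝ ≤ a} with hHdef
  have hHhalf : IsClosedHalfplane H := ⟨fL, a, hfL0, by ext x; exact Iff.rfl⟩
  have hHfront : frontier H = {x : Pt | ⟪u, x⟫_ℝ = a} :=
    frontier_inner_halfplane u hunorm a
  -- boundary points
  have hbnd : (↑X : Set Pt) ∩ frontier H = {p, q} := by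
    rw [hHfront]
    apply Subset.antisymm
    · rintro r ⟨hrX, hra⟩
      rw [Set.mem_setOf_eq] at hra
      by_contra hr
      simp only [Set.mem_insert_iff, Set.mem_singleton_iff, not_or] at hr
      obtain ⟨hrp, hrq⟩ := hr
      refine hcol p hpX q hqX r (by exact_mod_cast hrX) hpq (Ne.symm hrp) (Ne.symm hrq) ?_
      refine (collinear_level_set fL hfL0 a).subset ?_
      rintro s (rfl | rfl | rfl)
      · exact hpa
      · exact hqa
      · exact hra
    · rintro r (rfl | rfl)
      · exact ⟨by exact_mod_cast hpX, hpa⟩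
      · exact ⟨by exact_mod_cast hqX, hqa⟩
  -- the captured set
  have hcap : (↑X : Set Pt) ∩ H = Y ∪ {p} := by
    apply Subset.antisymm
    · rintro x ⟨hxX, hxH⟩
      rw [hHdef, Set.mem_setOf_eq] at hxH
      by_cases hxY : x ∈ Y
      · exact Or.inl hxY
      · have hxZ : x ∈ Zf := by
          rw [hZfdef, Finset.mem_sdiff]
          refine ⟨by exact_mod_cast hxX, fun h => hxY ?_⟩
          rw [← hYfcoe]; exact_mod_cast h
        have hxa : ⟪u, x⟫_ℝ = a := le_antisymm hxH (hZgea x hxZ)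
        have : x ∈ ({p, q} : Set Pt) := by
          rw [← hbnd, hHfront]; exact ⟨hxX, hxa⟩
        rcases this with rfl | rfl
        · exact Or.inr rfl
        · exact absurd hqYY hxY
    · rintro x (hxY | rfl)
      · exact ⟨hYX hxY, by rw [hHdef, Set.mem_setOf_eq]; exact hYlea x hxY⟩
      · exact ⟨by exact_mod_cast hpX, by rw [hHdef, Set.mem_setOf_eq, hpa]⟩
  exact ⟨H, p, hHhalf, ⟨by exact_mod_cast hpX, hpY⟩, hcap, q, hqYY, hbnd⟩
end
end

section
/- Let S ⊆ ℝ² be a nice shape and let S₁ and S₂ be two distinct S-ranges. Then the intersection of their boundaries, ∂S₁ ∩ ∂S₂, contains at most two points. -/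
open Set

noncomputable section

lemma span_pair_top {x y : Pt} (h : LinearIndependent ℝ ![x, y]) (z : Pt) :
    ∃ a b : ℝ, z = a • x + b • y := by
  have htop : Submodule.span ℝ ({x, y} : Set Pt) = ⊤ := by
    apply Submodule.eq_top_of_finrank_eq
    have h1 : Set.range ![x, y] = {x, y} := by
      simp [Matrix.range_cons, Matrix.range_empty, Set.pair_comm]
    rw [← h1, finrank_span_eq_card h]
    simp [finrank_euclideanSpace]
  have : z ∈ Submodule.span ℝ ({x, y} : Set Pt) := htop ▸ Submodule.mem_top
  rcases Submodule.mem_span_pair.1 this with ⟨a, b, hab⟩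
  exact ⟨a, b, hab.symm⟩

-- segment to frontier lemma
lemma seg_frontier {K : Set Pt} (hK : Convex ℝ K) (hcl : IsClosed K)
    {x y q : Pt} (hx : x ∈ K) (hy : y ∈ K) (hq : q ∈ openSegment ℝ x y)
    (hqf : q ∈ frontier K) : segment ℝ x y ⊆ frontier K := by
  intro m hm
  have hmK : m ∈ K := hK.segment_subset hx hy hm
  rw [hcl.frontier_eq] at hqf ⊢
  refine ⟨hmK, fun hmI => ?_⟩
  apply hqf.2
  rcases hq with ⟨a, b, ha, hb, hab, hq⟩
  rcases hm with ⟨c, d, hc, hd, hcd, hm⟩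
  rcases lt_trichotomy b d with hbd | hbd | hbd
  ·
    have hd0 : 0 < d := lt_of_le_of_lt hb.le hbd
    have key : q = (1 - b / d) • x + (b / d) • m := by
      rw [← hm]
      rw [smul_add, smul_smul, smul_smul, ← add_assoc, ← add_smul]
      have hc' : c = 1 - d := by linarith
      have ha' : a = 1 - b := by linarith
      have : 1 - b / d + b / d * c = a := by
        rw [hc', ha']; field_simp; ring
      rw [this, mul_comm (b/d) d, mul_div_cancel₀ _ hd0.ne']
      exact hq.symm
    have : q ∈ openSegment ℝ x m := by
      refine ⟨1 - b/d, b/d, ?_, ?_, by ring, key.symm⟩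
      · have : b / d < 1 := (div_lt_one hd0).2 hbd
        linarith
      · positivity
    exact hK.openSegment_closure_interior_subset_interior (subset_closure hx) hmI this
  · -- b = d then a = c, q = m
    have : a = c := by linarith
    have : q = m := by rw [← hq, ← hm, this, hbd]
    exact this ▸ hmI
  · -- d < b : q between m and y
    have hc0 : 0 < c := by nlinarith
    have hac : a / c < 1 := by
      rw [div_lt_one hc0]; linarith
    have key : q = (a / c) • m + (1 - a / c) • y := by
      rw [← hm]
      rw [smul_add, smul_smul, smul_smul, add_assoc, ← add_smul]
      have : a / c * c = a := div_mul_cancel₀ a hc0.ne'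
      rw [this]
      have hd' : d = 1 - c := by linarith
      have hb' : b = 1 - a := by linarith
      have : a / c * d + (1 - a / c) = b := by
        rw [hd', hb']; field_simp; ring
      rw [this]; exact hq.symm
    have : q ∈ openSegment ℝ m y := by
      refine ⟨a/c, 1 - a/c, by positivity, by linarith, by ring, key.symm⟩
    exact hK.openSegment_interior_closure_subset_interior hmI (subset_closure hy) this

/-- Property (v) of a nice shape, abstracted. -/
def PropV (K : Set Pt) : Prop :=
  ∀ x ∈ frontier K, ∀ y ∈ frontier K, segment ℝ x y ⊆ frontier K → x = y

/-- Three distinct collinear frontier points are impossible. -/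
lemma no_three_collinear {K : Set Pt} (hK : Convex ℝ K) (hcl : IsClosed K)
    (hV : PropV K) {z w : Pt} (hw : w ≠ 0) {a b c : ℝ} (hab : a < b) (hbc : b < c)
    (ha : z + a • w ∈ frontier K) (hb : z + b • w ∈ frontier K)
    (hc : z + c • w ∈ frontier K) : False := by
  have haK : z + a • w ∈ K := hcl.frontier_subset ha
  have hcK : z + c • w ∈ K := hcl.frontier_subset hc
  set u : ℝ := (b - a) / (c - a) with hu
  have hca : (0:ℝ) < c - a := by linarith
  have hu0 : 0 < u := div_pos (by linarith) hca
  have hu1 : u < 1 := by rw [hu, div_lt_one hca]; linarith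
  have hmem : z + b • w ∈ openSegment ℝ (z + a • w) (z + c • w) := by
    refine ⟨1 - u, u, by linarith, hu0, by ring, ?_⟩
    have : (1 - u) • (z + a • w) + u • (z + c • w)
        = z + ((1 - u) * a + u * c) • w := by module
    rw [this]
    congr 1
    have : (1 - u) * a + u * c = b := by
      rw [hu]; field_simp; ring
    rw [this]
  have hseg := seg_frontier hK hcl haK hcK hmem hb
  have := hV _ ha _ hc (by
    intro m hm; exact hseg hm)
  have : (a - c) • w = 0 := by
    have h2 := this
    have : z + a • w - (z + c • w) = (a - c) • w := by
      rw [sub_smul]; abel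
    rw [← this, h2, sub_self]
  rcases smul_eq_zero.1 this with h | h
  · have : a = c := by linarith [sub_eq_zero.1 h]
    linarith
  · exact hw h

lemma affcomb (a e : Pt) (σ p q : ℝ) :
    (1 - σ) • (a + p • e) + σ • (a + q • e) = a + ((1 - σ) * p + σ * q) • e := by
  module

lemma param_inj {a e : Pt} (he : e ≠ 0) {p q : ℝ} (h : a + p • e = a + q • e) : p = q := by
  have h2 : (p - q) • e = 0 := by
    rw [sub_smul]
    have := sub_eq_zero.2 h
    rw [show a + p • e - (a + q • e) = p • e - q • e by abel] at this
    exact this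
  rcases smul_eq_zero.1 h2 with h' | h'
  · linarith [sub_eq_zero.1 h']
  · exact absurd h' he

/-- Chord bound: a point of `K` collinear with two frontier points lies between them. -/
lemma chord_bound {K : Set Pt} (hK : Convex ℝ K) (hcl : IsClosed K)
    (hV : PropV K) {a b x : Pt} (hab : a ≠ b) (haf : a ∈ frontier K)
    (hbf : b ∈ frontier K) (hx : x ∈ K) {t : ℝ} (hxt : x = a + t • (b - a)) :
    0 ≤ t ∧ t ≤ 1 := by
  have haK : a ∈ K := hcl.frontier_subset haf
  have hbK : b ∈ K := hcl.frontier_subset hbf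
  set e : Pt := b - a with he_def
  have he : e ≠ 0 := sub_ne_zero.2 (Ne.symm hab)
  have hb_eq : b = a + (1:ℝ) • e := by rw [one_smul, he_def]; abel
  have ha_eq : a = a + (0:ℝ) • e := by rw [zero_smul, add_zero]
  constructor
  · by_contra h
    push_neg at h  -- t < 0
    set σ : ℝ := -t / (1 - t) with hσ
    have h1t : (0:ℝ) < 1 - t := by linarith
    have hσ0 : 0 < σ := div_pos (by linarith) h1t
    have hσ1 : σ < 1 := by rw [hσ, div_lt_one h1t]; linarith
    have hmem : a ∈ openSegment ℝ x b := by
      refine ⟨1 - σ, σ, by linarith, hσ0, by ring, ?_⟩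
      rw [hxt, hb_eq, affcomb]
      have : (1 - σ) * t + σ * 1 = 0 := by rw [hσ]; field_simp; ring
      rw [this, zero_smul, add_zero]
    have hseg := seg_frontier hK hcl hx hbK hmem haf
    have hxf : x ∈ frontier K := hseg (left_mem_segment ℝ x b)
    have hxb : x = b := hV _ hxf _ hbf hseg
    have : t = 1 := param_inj he (by rw [← hxt, ← hb_eq, hxb])
    linarith
  · by_contra h
    push_neg at h  -- 1 < t
    set σ : ℝ := 1 / t with hσ
    have ht0 : (0:ℝ) < t := by linarith
    have hσ0 : 0 < σ := by positivity
    have hσ1 : σ < 1 := by rw [hσ, div_lt_one ht0]; linarith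
    have hmem : b ∈ openSegment ℝ a x := by
      refine ⟨1 - σ, σ, by linarith, hσ0, by ring, ?_⟩
      rw [hxt, hb_eq]
      nth_rewrite 1 [ha_eq]
      rw [affcomb]
      congr 1
      have : (1 - σ) * 0 + σ * t = 1 := by rw [hσ]; field_simp; ring
      rw [this]
    have hseg := seg_frontier hK hcl haK hx hmem hbf
    have hxf : x ∈ frontier K := hseg (right_mem_segment ℝ a x)
    have hax : a = x := hV _ haf _ hxf hseg
    have : (0:ℝ) = t := param_inj he (by rw [← hxt, ← ha_eq, hax])
    linarith

/-- Core contradiction for the translation case. -/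
lemma coreT {K : Set Pt} (hK : Convex ℝ K) (hcl : IsClosed K) (hV : PropV K)
    {w : Pt} (hw : w ≠ 0) {P Q R : Pt}
    (hPf : P ∈ frontier K) (hQf : Q ∈ frontier K) (hQ'f : Q - w ∈ frontier K)
    (hRf : R ∈ frontier K) (hP'K : P - w ∈ K) (hR'K : R - w ∈ K)
    (hPR : P ≠ R) {s c : ℝ} (hs0 : 0 < s) (hs1 : s < 1)
    (hrel : (1 - s) • P + s • R = Q + c • w) : False := by
  have hPK : P ∈ K := hcl.frontier_subset hPf
  have hRK : R ∈ K := hcl.frontier_subset hRf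
  have hm'K : Q + c • w ∈ K := by
    rw [← hrel]; exact hK hPK hRK (by linarith) hs0.le (by ring)
  have hm''K : Q + c • w - w ∈ K := by
    have : Q + c • w - w = (1 - s) • (P - w) + s • (R - w) := by
      have h2 : (1 - s) • (P - w) + s • (R - w) = ((1 - s) • P + s • R) - w := by module
      rw [h2, hrel]
    rw [this]; exact hK hP'K hR'K (by linarith) hs0.le (by ring)
  have hab : Q - w ≠ Q := by
    intro h; apply hw
    have := sub_eq_zero.2 h
    rw [show Q - w - Q = -w by abel] at this
    simpa using this
  have hba : Q - (Q - w) = w := by abel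
  have hc1 := chord_bound hK hcl hV hab hQ'f hQf hm'K
    (t := c + 1) (by rw [hba]; module)
  have hc2 := chord_bound hK hcl hV hab hQ'f hQf hm''K
    (t := c) (by rw [hba]; module)
  have hc : c = 0 := by linarith [hc1.2, hc2.1]
  have hmem : Q ∈ openSegment ℝ P R := by
    refine ⟨1 - s, s, by linarith, hs0, by ring, ?_⟩
    rw [hrel, hc, zero_smul, add_zero]
  have hseg := seg_frontier hK hcl hPK hRK hmem hQf
  exact hPR (hV _ hPf _ hRf hseg)

/-- Core contradiction for the homothety case with external center. -/
lemma coreH {K : Set Pt} (hK : Convex ℝ K) (hcl : IsClosed K) (hV : PropV K)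
    {l : ℝ} (hl : 1 < l) {z d₁ d₂ d₃ : Pt}
    (hq1 : z + d₁ ∈ frontier K) (hq2 : z + d₂ ∈ frontier K) (hq3 : z + d₃ ∈ frontier K)
    (hp1 : z + l • d₁ ∈ frontier K) (hp2 : z + l • d₂ ∈ frontier K)
    (hp3 : z + l • d₃ ∈ frontier K)
    (hd2 : d₂ ≠ 0) (h13 : d₁ ≠ d₃)
    {t s : ℝ} (ht : 0 < t) (hs0 : 0 < s) (hs1 : s < 1)
    (hrel : t • d₂ = (1 - s) • d₁ + s • d₃) : False := by
  have hq1K : z + d₁ ∈ K := hcl.frontier_subset hq1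
  have hq3K : z + d₃ ∈ K := hcl.frontier_subset hq3
  have hp1K : z + l • d₁ ∈ K := hcl.frontier_subset hp1
  have hp3K : z + l • d₃ ∈ K := hcl.frontier_subset hp3
  have hm'K : z + t • d₂ ∈ K := by
    have : z + t • d₂ = (1 - s) • (z + d₁) + s • (z + d₃) := by
      rw [show (1 - s) • (z + d₁) + s • (z + d₃) = z + ((1 - s) • d₁ + s • d₃) by module,
        ← hrel]
    rw [this]; exact hK hq1K hq3K (by linarith) hs0.le (by ring)
  have hmK : z + (l * t) • d₂ ∈ K := by
    have : z + (l * t) • d₂ = (1 - s) • (z + l • d₁) + s • (z + l • d₃) := by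
      rw [show (1 - s) • (z + l • d₁) + s • (z + l • d₃)
          = z + l • ((1 - s) • d₁ + s • d₃) by module, ← hrel]
      module
    rw [this]; exact hK hp1K hp3K (by linarith) hs0.le (by ring)
  have hl1 : (0:ℝ) < l - 1 := by linarith
  have hab : z + d₂ ≠ z + l • d₂ := by
    intro h
    have : (1 - l) • d₂ = 0 := by
      rw [sub_smul, one_smul]
      have := sub_eq_zero.2 h
      rw [show z + d₂ - (z + l • d₂) = d₂ - l • d₂ by abel] at this
      exact this
    rcases smul_eq_zero.1 this with h' | h'
    · linarith [sub_eq_zero.1 h']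
    · exact hd2 h'
  have hba : z + l • d₂ - (z + d₂) = (l - 1) • d₂ := by
    rw [sub_smul, one_smul]; abel
  have hτ1 := chord_bound hK hcl hV hab hq2 hp2 hm'K
    (t := (t - 1)/(l - 1)) (by
      rw [hba, smul_smul, div_mul_cancel₀ _ hl1.ne']
      rw [sub_smul, one_smul]; abel)
  have hτ2 := chord_bound hK hcl hV hab hq2 hp2 hmK
    (t := (l * t - 1)/(l - 1)) (by
      rw [hba, smul_smul, div_mul_cancel₀ _ hl1.ne']
      rw [sub_smul, one_smul]; abel)
  have ht1 : t = 1 := by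
    have h1 : 0 ≤ (t - 1)/(l - 1) := hτ1.1
    have h2 : (l * t - 1)/(l - 1) ≤ 1 := hτ2.2
    rw [le_div_iff₀ hl1] at h1
    rw [div_le_one hl1] at h2
    nlinarith
  have hmem : z + d₂ ∈ openSegment ℝ (z + d₁) (z + d₃) := by
    refine ⟨1 - s, s, by linarith, hs0, by ring, ?_⟩
    rw [show (1 - s) • (z + d₁) + s • (z + d₃) = z + ((1 - s) • d₁ + s • d₃) by module,
      ← hrel, ht1, one_smul]
  have hseg := seg_frontier hK hcl hq1K hq3K hmem hq2
  have heq := hV _ hq1 _ hq3 hseg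
  apply h13
  have h0 := sub_eq_zero.2 heq
  rw [show z + d₁ - (z + d₃) = d₁ - d₃ by abel] at h0
  exact sub_eq_zero.1 h0

lemma notparT {K : Set Pt} (hK : Convex ℝ K) (hcl : IsClosed K) (hV : PropV K)
    {w : Pt} (hw : w ≠ 0) {p q : Pt}
    (hp : p ∈ frontier K) (hp' : p - w ∈ frontier K)
    (hq : q ∈ frontier K) (hq' : q - w ∈ frontier K)
    (hpq : p ≠ q) (c : ℝ) (hc : q = p + c • w) : False := by
  have hc0 : c ≠ 0 := by
    intro h; apply hpq; rw [hc, h, zero_smul, add_zero]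
  rcases lt_or_gt_of_ne hc0 with h | h
  · -- c < 0 : use (c-1, c, 0)
    refine no_three_collinear hK hcl hV (z := p) hw
      (show c - 1 < c by linarith) h ?_ ?_ ?_
    · rw [show p + (c-1) • w = q - w by rw [hc]; module]; exact hq'
    · rw [← hc]; exact hq
    · rw [zero_smul, add_zero]; exact hp
  · -- c > 0 : use (-1, 0, c)
    refine no_three_collinear hK hcl hV (z := p) hw
      (show (-1:ℝ) < 0 by norm_num) h ?_ ?_ ?_
    · rw [show p + (-1:ℝ) • w = p - w by module]; exact hp'
    · rw [zero_smul, add_zero]; exact hp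
    · rw [← hc]; exact hq

/-- Main translation lemma: no three distinct common boundary points. -/
lemma mainT {K : Set Pt} (hK : Convex ℝ K) (hcl : IsClosed K) (hV : PropV K)
    {w : Pt} (hw : w ≠ 0) {p₁ p₂ p₃ : Pt}
    (h1 : p₁ ∈ frontier K) (h1' : p₁ - w ∈ frontier K)
    (h2 : p₂ ∈ frontier K) (h2' : p₂ - w ∈ frontier K)
    (h3 : p₃ ∈ frontier K) (h3' : p₃ - w ∈ frontier K)
    (h12 : p₁ ≠ p₂) (h13 : p₁ ≠ p₃) (h23 : p₂ ≠ p₃) : False := by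
  have hnp12 : ∀ c : ℝ, p₂ ≠ p₁ + c • w := fun c hc =>
    notparT hK hcl hV hw h1 h1' h2 h2' h12 c hc
  have hnp13 : ∀ c : ℝ, p₃ ≠ p₁ + c • w := fun c hc =>
    notparT hK hcl hV hw h1 h1' h3 h3' h13 c hc
  have hnp23 : ∀ c : ℝ, p₃ ≠ p₂ + c • w := fun c hc =>
    notparT hK hcl hV hw h2 h2' h3 h3' h23 c hc
  have hindep : LinearIndependent ℝ ![p₂ - p₁, w] := by
    rw [linearIndependent_fin2]
    refine ⟨by simpa using hw, fun a ha => ?_⟩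
    simp only [Matrix.cons_val_one, Matrix.head_cons, Matrix.cons_val_zero] at ha
    exact hnp12 a (by rw [ha]; abel)
  obtain ⟨a, b, hab⟩ := span_pair_top hindep (p₃ - p₁)
  have ha0 : a ≠ 0 := by
    intro h; subst h
    exact hnp13 b (by linear_combination (norm := module) hab)
  have ha1 : a ≠ 1 := by
    intro h; subst h
    exact hnp23 b (by linear_combination (norm := module) hab)
  have hp3 : p₃ = (1 - a) • p₁ + a • p₂ + b • w := by
    linear_combination (norm := module) hab
  have hp1K' : p₁ - w ∈ K := hcl.frontier_subset h1'
  have hp2K' : p₂ - w ∈ K := hcl.frontier_subset h2'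
  have hp3K' : p₃ - w ∈ K := hcl.frontier_subset h3'
  rcases lt_trichotomy a 0 with hlt | heq | hgt
  · -- a < 0 : middle is p₁ ; (1-s)•p₂ + s•p₃ = p₁ + c•w, s = 1/(1-a)
    have h1a : (0:ℝ) < 1 - a := by linarith
    refine coreT hK hcl hV hw h2 h1 h1' h3 hp2K' hp3K' h23
      (s := 1/(1-a)) (c := b/(1-a)) (by positivity)
      (by rw [div_lt_one h1a]; linarith) ?_
    rw [hp3]
    match_scalars <;> field_simp <;> ring
  · exact absurd heq ha0
  · rcases lt_trichotomy a 1 with hlt1 | heq1 | hgt1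
    · -- 0 < a < 1 : middle is p₃ ; (1-a)•p₁ + a•p₂ = p₃ + (-b)•w
      refine coreT hK hcl hV hw h1 h3 h3' h2 hp1K' hp2K' h12
        (s := a) (c := -b) hgt hlt1 ?_
      rw [hp3]; module
    · exact absurd heq1 ha1
    · -- a > 1 : middle is p₂
      have ht0 : (0:ℝ) < a := by linarith
      refine coreT hK hcl hV hw h1 h2 h2' h3 hp1K' hp3K' h13
        (s := 1/a) (c := b/a) (by positivity) (by rw [div_lt_one ht0]; linarith) ?_
      rw [hp3]
      match_scalars <;> field_simp <;> ring

lemma convex3 {K : Set Pt} (hK : Convex ℝ K) {x y w : Pt}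
    (hx : x ∈ K) (hy : y ∈ K) (hw : w ∈ K)
    {a b c : ℝ} (ha : 0 < a) (hb : 0 < b) (hc : 0 < c) (habc : a + b + c = 1) :
    a • x + b • y + c • w ∈ K := by
  have hbc : (0:ℝ) < b + c := by linarith
  have hinner : (b/(b+c)) • y + (c/(b+c)) • w ∈ K :=
    hK hy hw (by positivity) (by positivity) (by field_simp)
  have houter := hK hx hinner (a := a) (b := b + c) ha.le hbc.le (by linarith)
  have : a • x + (b+c) • ((b/(b+c)) • y + (c/(b+c)) • w) = a • x + b • y + c • w := by
    match_scalars <;> field_simp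
  rwa [this] at houter

lemma mkrel {γ δ : ℝ} (hγ : 0 < γ) (hδ : 0 < δ) {dm dx dy : Pt}
    (h : dm = γ • dx + δ • dy) :
    ∃ t s : ℝ, 0 < t ∧ 0 < s ∧ s < 1 ∧ t • dm = (1 - s) • dx + s • dy := by
  refine ⟨1/(γ+δ), δ/(γ+δ), by positivity, by positivity,
    by rw [div_lt_one (by positivity)]; linarith, ?_⟩
  rw [h]
  match_scalars <;> field_simp <;> ring

lemma notparH {K : Set Pt} (hK : Convex ℝ K) (hcl : IsClosed K) (hV : PropV K)
    {l : ℝ} (hl : 1 < l) {z : Pt} (hz : z ∉ K) {di dj : Pt}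
    (hqi : z + di ∈ frontier K) (hpi : z + l • di ∈ frontier K)
    (hqj : z + dj ∈ frontier K) (hpj : z + l • dj ∈ frontier K)
    (hij : di ≠ dj) (hdi : di ≠ 0) (c : ℝ) (hc : dj = c • di) : False := by
  have hqiK : z + di ∈ K := hcl.frontier_subset hqi
  have hqjK : z + dj ∈ K := hcl.frontier_subset hqj
  rcases le_or_gt c 0 with h | h
  · -- z is a convex combination of qᵢ and qⱼ
    apply hz
    have h1c : (0:ℝ) < 1 - c := by linarith
    have hcomb := hK hqjK hqiK (a := 1/(1-c)) (b := -c/(1-c))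
      (by positivity) (div_nonneg (by linarith) h1c.le) (by field_simp; ring)
    have : (1/(1-c)) • (z + dj) + (-c/(1-c)) • (z + di) = z := by
      rw [hc]
      match_scalars <;> field_simp <;> ring
    rwa [this] at hcomb
  · -- c > 0
    have hc1 : c ≠ 1 := by
      intro h1; apply hij; rw [hc, h1, one_smul]
    rcases lt_or_gt_of_ne hc1 with hlt | hgt
    · -- c < 1 : triple (c, 1, l)
      refine no_three_collinear hK hcl hV (z := z) (w := di) hdi hlt hl ?_ ?_ ?_
      · rw [← hc]; exact hqj
      · rw [one_smul]; exact hqi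
      · exact hpi
    · -- c > 1 : triple (1, l, l*c)
      refine no_three_collinear hK hcl hV (z := z) (w := di) hdi hl
        (show l < l * c by nlinarith) ?_ ?_ ?_
      · rw [one_smul]; exact hqi
      · exact hpi
      · rw [show (l * c) • di = l • dj by rw [hc, smul_smul]]; exact hpj

/-- Main homothety lemma: no three distinct common boundary points. -/
lemma mainH {K : Set Pt} (hK : Convex ℝ K) (hcl : IsClosed K) (hV : PropV K)
    {l : ℝ} (hl : 1 < l) {z : Pt} {p₁ p₂ p₃ : Pt}
    (h1 : p₁ ∈ frontier K) (h1' : z + l⁻¹ • (p₁ - z) ∈ frontier K)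
    (h2 : p₂ ∈ frontier K) (h2' : z + l⁻¹ • (p₂ - z) ∈ frontier K)
    (h3 : p₃ ∈ frontier K) (h3' : z + l⁻¹ • (p₃ - z) ∈ frontier K)
    (h12 : p₁ ≠ p₂) (h13 : p₁ ≠ p₃) (h23 : p₂ ≠ p₃) : False := by
  have hl0 : (l:ℝ) ≠ 0 := by positivity
  set d₁ : Pt := l⁻¹ • (p₁ - z) with hd1_def
  set d₂ : Pt := l⁻¹ • (p₂ - z) with hd2_def
  set d₃ : Pt := l⁻¹ • (p₃ - z) with hd3_def
  have hp1 : p₁ = z + l • d₁ := by rw [hd1_def, smul_inv_smul₀ hl0]; abel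
  have hp2 : p₂ = z + l • d₂ := by rw [hd2_def, smul_inv_smul₀ hl0]; abel
  have hp3 : p₃ = z + l • d₃ := by rw [hd3_def, smul_inv_smul₀ hl0]; abel
  have hd12 : d₁ ≠ d₂ := fun h => h12 (by rw [hp1, hp2, h])
  have hd13 : d₁ ≠ d₃ := fun h => h13 (by rw [hp1, hp3, h])
  have hd23 : d₂ ≠ d₃ := fun h => h23 (by rw [hp2, hp3, h])
  by_cases hzK : z ∈ K
  · -- center inside K : already one point ≠ z gives a contradiction
    have key : ∀ p : Pt, p ∈ frontier K → z + l⁻¹ • (p - z) ∈ frontier K →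
        p ≠ z → False := by
      intro p hp hq hpz
      have hpK : p ∈ K := hcl.frontier_subset hp
      have hmem : z + l⁻¹ • (p - z) ∈ openSegment ℝ z p := by
        refine ⟨1 - l⁻¹, l⁻¹, ?_, by positivity, by ring, by module⟩
        have : l⁻¹ < 1 := by
          rw [inv_lt_one_iff₀]; right; exact hl
        linarith
      have hseg := seg_frontier hK hcl hzK hpK hmem hq
      have hzf : z ∈ frontier K := hseg (left_mem_segment ℝ z p)
      exact hpz ((hV _ hzf _ hp hseg).symm)
    rcases ne_or_eq p₁ z with h | h
    · exact key p₁ h1 h1' h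
    · exact key p₂ h2 h2' (fun hh => h12 (h.trans hh.symm))
  · -- center outside K
    have hq1K : z + d₁ ∈ K := hcl.frontier_subset h1'
    have hq2K : z + d₂ ∈ K := hcl.frontier_subset h2'
    have hq3K : z + d₃ ∈ K := hcl.frontier_subset h3'
    have hd1 : d₁ ≠ 0 := by
      intro h; apply hzK; rw [h, add_zero] at hq1K; exact hq1K
    have hd2 : d₂ ≠ 0 := by
      intro h; apply hzK; rw [h, add_zero] at hq2K; exact hq2K
    have hd3 : d₃ ≠ 0 := by
      intro h; apply hzK; rw [h, add_zero] at hq3K; exact hq3K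
    have hp1f : z + l • d₁ ∈ frontier K := hp1 ▸ h1
    have hp2f : z + l • d₂ ∈ frontier K := hp2 ▸ h2
    have hp3f : z + l • d₃ ∈ frontier K := hp3 ▸ h3
    have hnp12 : ∀ c : ℝ, d₁ ≠ c • d₂ := fun c hc =>
      notparH hK hcl hV hl hzK h2' hp2f h1' hp1f hd12.symm hd2 c hc
    have hnp13 : ∀ c : ℝ, d₃ ≠ c • d₁ := fun c hc =>
      notparH hK hcl hV hl hzK h1' hp1f h3' hp3f hd13 hd1 c hc
    have hnp23 : ∀ c : ℝ, d₃ ≠ c • d₂ := fun c hc =>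
      notparH hK hcl hV hl hzK h2' hp2f h3' hp3f hd23 hd2 c hc
    have hindep : LinearIndependent ℝ ![d₁, d₂] := by
      rw [linearIndependent_fin2]
      refine ⟨by simpa using hd2, fun a ha => ?_⟩
      simp only [Matrix.cons_val_one, Matrix.head_cons, Matrix.cons_val_zero] at ha
      exact hnp12 a ha.symm
    obtain ⟨α, β, hαβ⟩ := span_pair_top hindep d₃
    have hα0 : α ≠ 0 := by
      intro h; subst h
      exact hnp23 β (by rw [hαβ, zero_smul, zero_add])
    have hβ0 : β ≠ 0 := by
      intro h; subst h
      exact hnp13 α (by rw [hαβ, zero_smul, add_zero])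
    rcases lt_or_gt_of_ne hα0 with hαneg | hαpos
    · rcases lt_or_gt_of_ne hβ0 with hβneg | hβpos
      · -- α < 0, β < 0 : z ∈ K, contradiction
        apply hzK
        have hT0 : (0:ℝ) < 1 - α - β := by linarith
        have hzeq : z = (-α/(1-α-β)) • (z + d₁) + (-β/(1-α-β)) • (z + d₂) +
            (1/(1-α-β)) • (z + d₃) := by
          rw [hαβ]
          match_scalars <;> field_simp <;> ring
        rw [hzeq]
        exact convex3 hK hq1K hq2K hq3K (div_pos (by linarith) hT0)
          (div_pos (by linarith) hT0) (div_pos one_pos hT0) (by field_simp; ring)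
      · -- α < 0, β > 0 : middle is d₂ : d₂ = (-α/β)•d₁ + (1/β)•d₃
        have hcomb : d₂ = (-α/β) • d₁ + (1/β) • d₃ := by
          rw [hαβ]
          match_scalars <;> field_simp <;> ring
        obtain ⟨t, s, ht, hs0, hs1, hrel⟩ :=
          mkrel (div_pos (by linarith) hβpos) (div_pos one_pos hβpos) hcomb
        exact coreH hK hcl hV hl h1' h2' h3' hp1f hp2f hp3f hd2 hd13 ht hs0 hs1 hrel
    · rcases lt_or_gt_of_ne hβ0 with hβneg | hβpos
      · -- α > 0, β < 0 : middle is d₁ : d₁ = (1/α)•d₃ + (-β/α)•d₂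
        have hcomb : d₁ = (1/α) • d₃ + (-β/α) • d₂ := by
          rw [hαβ]
          match_scalars <;> field_simp <;> ring
        obtain ⟨t, s, ht, hs0, hs1, hrel⟩ :=
          mkrel (div_pos one_pos hαpos) (div_pos (by linarith) hαpos) hcomb
        exact coreH hK hcl hV hl h3' h1' h2' hp3f hp1f hp2f hd1 hd23.symm ht hs0 hs1 hrel
      · -- α > 0, β > 0 : middle is d₃
        obtain ⟨t, s, ht, hs0, hs1, hrel⟩ := mkrel hαpos hβpos hαβ
        exact coreH hK hcl hV hl h1' h3' h2' hp1f hp3f hp2f hd3 hd12 ht hs0 hs1 hrel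

/-- The affine homothety as a homeomorphism of the plane. -/
def affH (c : ℝ) (hc : c ≠ 0) (v : Pt) : Pt ≃ₜ Pt where
  toFun x := c • x + v
  invFun y := c⁻¹ • (y - v)
  left_inv x := by
    simp only [add_sub_cancel_right, smul_smul, inv_mul_cancel₀ hc, one_smul]
  right_inv y := by
    simp only [smul_smul, mul_inv_cancel₀ hc, one_smul, sub_add_cancel]
  continuous_toFun := by
    exact (continuous_id.const_smul c).add continuous_const
  continuous_invFun := by
    exact ((continuous_id.sub continuous_const).const_smul c⁻¹)

lemma frontier_affine (c : ℝ) (hc : c ≠ 0) (v : Pt) (S : Set Pt) :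
    frontier ((fun x => c • x + v) '' S) = (fun x => c • x + v) '' frontier S :=
  ((affH c hc v).image_frontier S).symm

lemma convex_affine {S : Set Pt} (hS : Convex ℝ S) (c : ℝ) (v : Pt) :
    Convex ℝ ((fun x => c • x + v) '' S) := by
  rintro - ⟨x, hx, rfl⟩ - ⟨y, hy, rfl⟩ a b ha hb hab
  refine ⟨a • x + b • y, hS hx hy ha hb hab, ?_⟩
  have : a • (c • x + v) + b • (c • y + v) = c • (a • x + b • y) + (a + b) • v := by
    module
  rw [this, hab, one_smul]

lemma propV_affine {S : Set Pt} (hV : PropV S) (c : ℝ) (hc : c ≠ 0) (v : Pt) :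
    PropV ((fun x => c • x + v) '' S) := by
  intro x hx y hy hseg
  rw [frontier_affine c hc v] at hx hy
  obtain ⟨x', hx', rfl⟩ := hx
  obtain ⟨y', hy', rfl⟩ := hy
  have hseg' : segment ℝ x' y' ⊆ frontier S := by
    rintro m ⟨a, b, ha, hb, hab, rfl⟩
    have hmem : c • (a • x' + b • y') + v ∈ segment ℝ (c • x' + v) (c • y' + v) := by
      refine ⟨a, b, ha, hb, hab, ?_⟩
      have : a • (c • x' + v) + b • (c • y' + v)
          = c • (a • x' + b • y') + (a + b) • v := by module
      rw [this, hab, one_smul]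
    have := hseg hmem
    rw [frontier_affine c hc v] at this
    obtain ⟨m', hm', hm'eq⟩ := this
    have : m' = a • x' + b • y' := by
      have h2 := hm'eq
      have : c • m' = c • (a • x' + b • y') := by
        have := sub_eq_zero.2 h2
        rw [show c • m' + v - (c • (a • x' + b • y') + v)
            = c • m' - c • (a • x' + b • y') by abel] at this
        exact sub_eq_zero.1 this
      exact smul_right_injective Pt hc this
    rwa [← this]
  rw [hV _ hx' _ hy' hseg']

lemma cover_of_no_three {F : Set Pt}
    (h3 : ∀ a ∈ F, ∀ b ∈ F, ∀ c ∈ F, a = b ∨ a = c ∨ b = c) :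
    ∃ p q : Pt, F ⊆ {p, q} := by
  by_cases hne : F.Nonempty
  · obtain ⟨a, ha⟩ := hne
    by_cases h2 : ∃ b ∈ F, b ≠ a
    · obtain ⟨b, hb, hba⟩ := h2
      refine ⟨a, b, fun x hx => ?_⟩
      rcases h3 x hx a ha b hb with h | h | h
      · exact Or.inl h
      · exact Or.inr h
      · exact absurd h.symm hba
    · push_neg at h2
      exact ⟨a, a, fun x hx => Or.inl (h2 x hx)⟩
  · exact ⟨0, 0, fun x hx => absurd ⟨x, hx⟩ hne⟩

/-- the boundaries of two distinct ranges of a nice shape meet in at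
most two points. -/
theorem boundaries_meet_in_at_most_two_points
    (S : Set Pt) (hS : NiceShape S)
    (S₁ S₂ : Set Pt) (h1 : IsRange S S₁) (h2 : IsRange S S₂) (hne : S₁ ≠ S₂) :
    ∃ p q : Pt, frontier S₁ ∩ frontier S₂ ⊆ {p, q} := by
  obtain ⟨hSne, hSconv, hScomp, hSline, hSv⟩ := hS
  obtain ⟨c₁, v₁, hc₁, hS₁⟩ := h1
  obtain ⟨c₂, v₂, hc₂, hS₂⟩ := h2
  set l : ℝ := c₂ / c₁ with hl_def
  have hl : 0 < l := div_pos hc₂ hc₁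
  set w : Pt := v₂ - l • v₁ with hw_def
  have hrel : S₂ = (fun x => l • x + w) '' S₁ := by
    rw [hS₁, hS₂, ← Set.image_comp]
    apply Set.image_congr'
    intro x
    simp only [Function.comp_apply]
    rw [hw_def, hl_def]
    match_scalars <;> field_simp <;> ring
  have hK1conv : Convex ℝ S₁ := by rw [hS₁]; exact convex_affine hSconv c₁ v₁
  have hK1cl : IsClosed S₁ := by
    rw [hS₁]
    exact (hScomp.image ((continuous_id.const_smul c₁).add continuous_const)).isClosed
  have hK1V : PropV S₁ := by rw [hS₁]; exact propV_affine hSv c₁ hc₁.ne' v₁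
  have hK2conv : Convex ℝ S₂ := by rw [hS₂]; exact convex_affine hSconv c₂ v₂
  have hK2cl : IsClosed S₂ := by
    rw [hS₂]
    exact (hScomp.image ((continuous_id.const_smul c₂).add continuous_const)).isClosed
  have hK2V : PropV S₂ := by rw [hS₂]; exact propV_affine hSv c₂ hc₂.ne' v₂
  have hfr : frontier S₂ = (fun x => l • x + w) '' frontier S₁ := by
    rw [hrel]; exact frontier_affine l hl.ne' w S₁
  apply cover_of_no_three
  intro a ha b hb c hc
  by_contra hcon
  push_neg at hcon
  obtain ⟨hab, hac, hbc⟩ := hcon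
  obtain ⟨ha1, ha2⟩ := ha
  obtain ⟨hb1, hb2⟩ := hb
  obtain ⟨hc1, hc2⟩ := hc
  by_cases hl1 : l = 1
  · by_cases hw0 : w = 0
    · exact hne (hrel.trans (by rw [hl1, hw0]; simp)).symm
    · -- translation case
      have hstep : ∀ p : Pt, p ∈ frontier S₂ → p - w ∈ frontier S₁ := by
        intro p hp
        rw [hfr] at hp
        obtain ⟨x, hx, rfl⟩ := hp
        show l • x + w - w ∈ frontier S₁
        rw [hl1, one_smul, add_sub_cancel_right]
        exact hx
      exact mainT hK1conv hK1cl hK1V hw0 ha1 (hstep a ha2) hb1 (hstep b hb2)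
        hc1 (hstep c hc2) hab hac hbc
  · set z : Pt := (1 - l)⁻¹ • w with hz_def
    have h1l : (1:ℝ) - l ≠ 0 := fun h => hl1 (by linarith)
    rcases lt_or_gt_of_ne hl1 with hllt | hlgt
    · -- l < 1 : use K = S₂ with ratio l⁻¹ > 1
      have hstep : ∀ p : Pt, p ∈ frontier S₁ → z + (l⁻¹)⁻¹ • (p - z) ∈ frontier S₂ := by
        intro p hp
        rw [inv_inv]
        have heq : z + l • (p - z) = l • p + w := by
          rw [hz_def]; match_scalars <;> field_simp <;> ring
        rw [heq, hfr]
        exact ⟨p, hp, rfl⟩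
      have hinv1 : 1 < l⁻¹ := (one_lt_inv₀ hl).2 hllt
      exact mainH hK2conv hK2cl hK2V hinv1 ha2 (hstep a ha1) hb2 (hstep b hb1)
        hc2 (hstep c hc1) hab hac hbc
    · -- l > 1 : K = S₁
      have hstep : ∀ p : Pt, p ∈ frontier S₂ → z + l⁻¹ • (p - z) ∈ frontier S₁ := by
        intro p hp
        rw [hfr] at hp
        obtain ⟨x, hx, rfl⟩ := hp
        have heq : z + l⁻¹ • (l • x + w - z) = x := by
          rw [hz_def]; match_scalars <;> field_simp <;> ring
        show z + l⁻¹ • (l • x + w - z) ∈ frontier S₁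
        rw [heq]
        exact hx
      exact mainH hK1conv hK1cl hK1V hlgt ha1 (hstep a ha2) hb1 (hstep b hb2)
        hc1 (hstep c hc2) hab hac hbc
end
end

section
/- Let S ⊆ ℝ² be a nice shape, let S₁ and S₂ be two distinct S-ranges with ∂S₁ ∩ ∂S₂ = {p, q} for two distinct points p, q, and let L and R be the two open halfplanes bounded by the line through p and q. Then either (S₁ ∩ L ⊊ S₂ ∩ L and S₂ ∩ R ⊊ S₁ ∩ R) or (S₂ ∩ L ⊊ S₁ ∩ L and S₁ ∩ R ⊊ S₂ ∩ R). -/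
open Set

noncomputable section

/-- affine homeomorphism x ↦ c•x + v -/
def hmt (c : ℝ) (hc : c ≠ 0) (v : Pt) : Pt ≃ₜ Pt :=
  (Homeomorph.smulOfNeZero c hc).trans (Homeomorph.addRight v)

lemma hmt_apply (c : ℝ) (hc : c ≠ 0) (v : Pt) (x : Pt) : hmt c hc v x = c • x + v := rfl

/-- same map as affine map -/
def ham (c : ℝ) (v : Pt) : Pt →ᵃ[ℝ] Pt where
  toFun x := c • x + v
  linear := c • LinearMap.id
  map_vadd' := by
    intro x y
    simp [smul_add]
    module

lemma ham_apply (c : ℝ) (v : Pt) (x : Pt) : ham c v x = c • x + v := rfl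

def NoSeg (A : Set Pt) : Prop :=
  ∀ x ∈ frontier A, ∀ y ∈ frontier A, segment ℝ x y ⊆ frontier A → x = y

lemma range_transport {S T : Set Pt} (c : ℝ) (hc : 0 < c) (v : Pt)
    (hT : T = (fun x => c • x + v) '' S) :
    frontier T = (fun x => c • x + v) '' frontier S ∧
    interior T = (fun x => c • x + v) '' interior S := by
  have hc' : c ≠ 0 := ne_of_gt hc
  have h1 : T = hmt c hc' v '' S := hT
  constructor
  · rw [h1, ← Homeomorph.image_frontier]; rfl
  · rw [h1, ← Homeomorph.image_interior]; rfl

lemma range_props {S T : Set Pt} (hconv : Convex ℝ S) (hcomp : IsCompact S)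
    (hns : NoSeg S) (hT : IsRange S T) :
    Convex ℝ T ∧ IsCompact T ∧ NoSeg T ∧ ((interior S).Nonempty ↔ (interior T).Nonempty) := by
  obtain ⟨c, v, hc, hTe⟩ := hT
  have hc' : c ≠ 0 := ne_of_gt hc
  obtain ⟨hfr, hin⟩ := range_transport c hc v hTe
  have hmap : ∀ x, ham c v x = c • x + v := fun x => rfl
  have hTam : T = ham c v '' S := hTe
  refine ⟨?_, ?_, ?_, ?_⟩
  · rw [hTam]; exact hconv.affine_image _
  · rw [hTe]
    exact hcomp.image ((continuous_id.const_smul c).add continuous_const)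
  · intro x hx y hy hseg
    rw [hfr] at hx hy
    obtain ⟨x₀, hx₀, rfl⟩ := hx
    obtain ⟨y₀, hy₀, rfl⟩ := hy
    have hinj : Function.Injective (fun x : Pt => c • x + v) :=
      (hmt c hc' v).injective
    have hseg' : segment ℝ x₀ y₀ ⊆ frontier S := by
      intro z hz
      have : (fun x : Pt => c • x + v) z ∈ segment ℝ (c • x₀ + v) (c • y₀ + v) := by
        have := image_segment ℝ (ham c v) x₀ y₀
        rw [← hmap x₀, ← hmap y₀, ← this]
        exact ⟨z, hz, rfl⟩
      have hmem := hseg this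
      rw [hfr] at hmem
      obtain ⟨z', hz', hz'e⟩ := hmem
      have : z' = z := hinj hz'e
      rwa [← this]
    have := hns x₀ hx₀ y₀ hy₀ hseg'
    rw [this]
  · rw [hin]
    exact ⟨fun ⟨x, hx⟩ => ⟨_, ⟨x, hx, rfl⟩⟩, fun ⟨y, x, hx, _⟩ => ⟨x, hx⟩⟩

lemma strict_of_noseg {A : Set Pt} (hA : Convex ℝ A) (hcl : IsClosed A) (hns : NoSeg A) :
    ∀ x ∈ A, ∀ y ∈ A, x ≠ y → openSegment ℝ x y ⊆ interior A := by
  intro x hx y hy hxy z hz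
  by_contra hzint
  have hfr : frontier A = A \ interior A := hcl.frontier_eq
  obtain ⟨a, b, ha, hb, hab, hzeq⟩ := hz
  have hzA : z ∈ A := hA.segment_subset hx hy (openSegment_subset_segment ℝ x y ⟨a, b, ha, hb, hab, hzeq⟩)
  have hall : segment ℝ x y ⊆ frontier A := by
    rintro w ⟨a', b', ha', hb', hab', rfl⟩
    set w := a' • x + b' • y with hw
    have hwA : w ∈ A := hA hx hy ha' hb' hab'
    rw [hfr]
    refine ⟨hwA, fun hwint => ?_⟩
    rcases lt_trichotomy b' b with hlt | heq | hgt
    · -- z ∈ openSegment w y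
      have hb1 : b < 1 := by nlinarith
      have hden : (0:ℝ) < 1 - b' := by linarith
      set t : ℝ := (b - b') / (1 - b') with ht
      have ht0 : 0 < t := div_pos (by linarith) hden
      have ht1 : t < 1 := (div_lt_one hden).2 (by linarith)
      have hzmem : z ∈ openSegment ℝ w y := by
        refine ⟨1 - t, t, by linarith, ht0, by ring, ?_⟩
        rw [← hzeq, hw, ht]
        match_scalars <;> field_simp <;> nlinarith
      exact hzint (hA.openSegment_interior_closure_subset_interior hwint
        (subset_closure hy) hzmem)
    · exact hzint (by rw [← hzeq, show a = a' by linarith, ← heq]; exact hwint)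
    · -- z ∈ openSegment w x
      have hb'0 : 0 < b' := lt_trans hb hgt
      set t : ℝ := (b' - b) / b' with ht
      have ht0 : 0 < t := div_pos (by linarith) hb'0
      have ht1 : t < 1 := (div_lt_one hb'0).2 (by linarith)
      have hzmem : z ∈ openSegment ℝ w x := by
        refine ⟨1 - t, t, by linarith, ht0, by ring, ?_⟩
        rw [← hzeq, hw, ht]
        match_scalars <;> field_simp <;> nlinarith
      exact hzint (hA.openSegment_interior_closure_subset_interior hwint
        (subset_closure hx) hzmem)
  exact hxy (hns x (hall (left_mem_segment ℝ x y)) y (hall (right_mem_segment ℝ x y)) hall)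

section Gauge

variable {A : Set Pt} {o : Pt}

/-- translated copy of A centered at o -/
def ctr (A : Set Pt) (o : Pt) : Set Pt := (fun z => z - o) '' A

/-- gauge of A as seen from o -/
def bG (A : Set Pt) (o : Pt) (x : Pt) : ℝ := gauge (ctr A o) (x - o)

lemma sub_fun_eq (o : Pt) : (fun z : Pt => z - o) = ⇑(Homeomorph.addRight (-o)) := by
  funext z
  show z - o = z + (-o)
  rw [sub_eq_add_neg]

lemma ctr_eq (A : Set Pt) (o : Pt) : ctr A o = (Homeomorph.addRight (-o)) '' A := by
  rw [ctr, sub_fun_eq]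

lemma ctr_mem_iff {x : Pt} : x - o ∈ ctr A o ↔ x ∈ A := by
  constructor
  · rintro ⟨z, hz, hze⟩
    rwa [← sub_left_injective hze]
  · intro hx; exact ⟨x, hx, rfl⟩

variable (hA : Convex ℝ A) (hcomp : IsCompact A) (ho : o ∈ interior A)

include hA hcomp ho

lemma ctr_facts : Convex ℝ (ctr A o) ∧ IsClosed (ctr A o) ∧ (ctr A o) ∈ nhds (0:Pt) ∧
    interior (ctr A o) = (fun z => z - o) '' interior A ∧
    frontier (ctr A o) = (fun z => z - o) '' frontier A := by
  have he : (ctr A o) = (Homeomorph.addRight (-o)) '' A := ctr_eq A o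
  have hint : interior (ctr A o) = (fun z => z - o) '' interior A := by
    rw [he, ← Homeomorph.image_interior, sub_fun_eq]
  refine ⟨?_, ?_, ?_, hint, ?_⟩
  · rw [show ctr A o = (fun x : Pt => -o + x) '' A by
      rw [ctr, show (fun z : Pt => z - o) = (fun x : Pt => -o + x) from
        funext fun z => by rw [sub_eq_add_neg, add_comm]]]
    exact hA.translate (-o)
  · exact (hcomp.image ((continuous_id.sub continuous_const))).isClosed
  · rw [← mem_interior_iff_mem_nhds, hint]
    exact ⟨o, ho, by simp⟩
  · rw [he, ← Homeomorph.image_frontier, sub_fun_eq]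

lemma bG_lt_one_iff {x : Pt} : bG A o x < 1 ↔ x ∈ interior A := by
  obtain ⟨hc, hcl, hnhds, hint, hfr⟩ := ctr_facts hA hcomp ho
  rw [bG, gauge_lt_one_iff_mem_interior hc hnhds, hint]
  constructor
  · rintro ⟨z, hz, hze⟩
    rwa [← sub_left_injective hze]
  · intro hx; exact ⟨x, hx, rfl⟩

lemma bG_le_one_iff {x : Pt} : bG A o x ≤ 1 ↔ x ∈ A := by
  obtain ⟨hc, hcl, hnhds, hint, hfr⟩ := ctr_facts hA hcomp ho
  rw [bG, gauge_le_one_iff_mem_closure hc hnhds, hcl.closure_eq, ctr_mem_iff]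

lemma bG_eq_one_iff {x : Pt} : bG A o x = 1 ↔ x ∈ frontier A := by
  obtain ⟨hc, hcl, hnhds, hint, hfr⟩ := ctr_facts hA hcomp ho
  rw [bG, gauge_eq_one_iff_mem_frontier hc hnhds, hfr]
  constructor
  · rintro ⟨z, hz, hze⟩
    rwa [← sub_left_injective hze]
  · intro hx; exact ⟨x, hx, rfl⟩

lemma bG_pos {x : Pt} (hx : x ≠ o) : 0 < bG A o x := by
  obtain ⟨hc, hcl, hnhds, hint, hfr⟩ := ctr_facts hA hcomp ho
  rw [bG, gauge_pos (absorbent_nhds_zero hnhds)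
    (NormedSpace.isVonNBounded_of_isBounded ℝ
      ((hcomp.image (continuous_id.sub continuous_const)).isBounded))]
  exact sub_ne_zero_of_ne hx

omit hA hcomp ho in
lemma bG_smul {x : Pt} {r : ℝ} (hr : 0 ≤ r) : bG A o (o + r • (x - o)) = r * bG A o x := by
  rw [bG, bG, show o + r • (x - o) - o = r • (x - o) by abel, gauge_smul_of_nonneg hr, smul_eq_mul]

lemma bG_continuous : Continuous (fun x => bG A o x) := by
  obtain ⟨hc, hcl, hnhds, hint, hfr⟩ := ctr_facts hA hcomp ho
  exact (continuous_gauge hc hnhds).comp (continuous_id.sub continuous_const)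

end Gauge

section Expt

/-- exit point of ray from o through x on the frontier of A -/
def expt (A : Set Pt) (o x : Pt) : Pt := o + (bG A o x)⁻¹ • (x - o)

variable {A : Set Pt} {o : Pt} (hA : Convex ℝ A) (hcomp : IsCompact A) (ho : o ∈ interior A)

include hA hcomp ho

lemma expt_frontier {x : Pt} (hx : x ≠ o) : expt A o x ∈ frontier A := by
  have hg := bG_pos hA hcomp ho hx
  rw [← bG_eq_one_iff hA hcomp ho, expt, bG_smul (le_of_lt (inv_pos.2 hg)),
    inv_mul_cancel₀ (ne_of_gt hg)]

omit hA hcomp ho in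
lemma expt_clm (f : Pt →L[ℝ] ℝ) (x : Pt) :
    f (expt A o x) = f o + (bG A o x)⁻¹ * (f x - f o) := by
  simp [expt]

lemma mem_segment_expt {x : Pt} (hxA : x ∈ A) (hx : x ≠ o) :
    x ∈ segment ℝ o (expt A o x) := by
  have hg : 0 < bG A o x := bG_pos hA hcomp ho hx
  have hg1 : bG A o x ≤ 1 := (bG_le_one_iff hA hcomp ho).2 hxA
  have hg0 : bG A o x ≠ 0 := ne_of_gt hg
  refine ⟨1 - bG A o x, bG A o x, by linarith, le_of_lt hg, by ring, ?_⟩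
  rw [expt]
  match_scalars <;> (field_simp; try ring)

lemma arc_eq (f : Pt →L[ℝ] ℝ) (a : ℝ) (hfo : f o = a) :
    frontier A ∩ {x | a < f x} = (fun x => expt A o x) '' {x | a < f x} := by
  have hclosed : IsClosed A := hcomp.isClosed
  ext y
  constructor
  · rintro ⟨hyf, hya⟩
    have hyo : y ≠ o := by
      intro h
      rw [hclosed.frontier_eq] at hyf
      exact hyf.2 (h ▸ ho)
    have hg1 : bG A o y = 1 := (bG_eq_one_iff hA hcomp ho).2 hyf
    refine ⟨y, hya, ?_⟩
    simp only [expt, hg1, inv_one, one_smul, add_sub_cancel]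
  · rintro ⟨x, hx, rfl⟩
    have hx' : a < f x := hx
    have hxo : x ≠ o := by
      rintro rfl; rw [hfo] at hx'; exact lt_irrefl a hx'
    have hg : 0 < bG A o x := bG_pos hA hcomp ho hxo
    refine ⟨expt_frontier hA hcomp ho hxo, ?_⟩
    show a < f (expt A o x)
    rw [expt_clm, hfo]
    have : 0 < (bG A o x)⁻¹ * (f x - a) := mul_pos (inv_pos.2 hg) (by simpa using hx)
    linarith

lemma arc_preconnected (f : Pt →L[ℝ] ℝ) (a : ℝ) (hfo : f o = a) :
    IsPreconnected (frontier A ∩ {x | a < f x}) := by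
  rw [arc_eq hA hcomp ho f a hfo]
  have hconv : Convex ℝ {x : Pt | a < f x} := convex_halfSpace_gt (LinearMap.isLinear _) a
  apply hconv.isPreconnected.image
  apply ContinuousOn.add continuousOn_const
  refine ContinuousOn.smul (f := fun x => (bG A o x)⁻¹) (g := fun x => x - o) ?_ ?_
  · apply ContinuousOn.inv₀ ((bG_continuous hA hcomp ho).continuousOn)
    intro x hx
    have hx' : a < f x := hx
    have hxo : x ≠ o := by
      rintro rfl; rw [hfo] at hx'; exact lt_irrefl a hx'
    exact ne_of_gt (bG_pos hA hcomp ho hxo)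
  · exact (continuous_id.sub continuous_const).continuousOn

lemma arc_nonempty (f : Pt →L[ℝ] ℝ) (a : ℝ) (hfo : f o = a) (hf : f ≠ 0) :
    (frontier A ∩ {x | a < f x}).Nonempty := by
  rw [arc_eq hA hcomp ho f a hfo]
  obtain ⟨u, hu⟩ := DFunLike.ne_iff.mp hf
  refine ⟨_, ⟨o + (f u)⁻¹ • u, ?_, rfl⟩⟩
  show a < f (o + (f u)⁻¹ • u)
  have : f (o + (f u)⁻¹ • u) = a + 1 := by
    rw [map_add, hfo, map_smul, smul_eq_mul, inv_mul_cancel₀ (by simpa using hu)]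
  rw [this]; linarith

end Expt

section Side

variable {A B : Set Pt} {f : Pt →L[ℝ] ℝ} {a : ℝ} {o : Pt}

lemma ml (hAconv : Convex ℝ A) (hAcomp : IsCompact A) (hoA : o ∈ interior A)
    (hBconv : Convex ℝ B) (hoB : o ∈ interior B) (hfo : f o = a)
    (harc : frontier A ∩ {x | a < f x} ⊆ interior B) :
    A ∩ {x | a < f x} ⊆ interior B := by
  rintro x ⟨hxA, hxH⟩
  have hx' : a < f x := hxH
  have hxo : x ≠ o := by rintro rfl; rw [hfo] at hx'; exact lt_irrefl a hx'
  have hg : 0 < bG A o x := bG_pos hAconv hAcomp hoA hxo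
  have hy : expt A o x ∈ frontier A := expt_frontier hAconv hAcomp hoA hxo
  have hyH : a < f (expt A o x) := by
    rw [expt_clm, hfo]
    have : 0 < (bG A o x)⁻¹ * (f x - a) := mul_pos (inv_pos.2 hg) (by linarith)
    linarith
  have hyB : expt A o x ∈ interior B := harc ⟨hy, hyH⟩
  exact (hBconv.interior).segment_subset hoB hyB
    (mem_segment_expt hAconv hAcomp hoA hxA hxo)

lemma no_cross (hAconv : Convex ℝ A) (hAcomp : IsCompact A) (hoA : o ∈ interior A)
    (hBconv : Convex ℝ B) (hBcomp : IsCompact B) (hoB : o ∈ interior B) (hfo : f o = a)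
    (h1 : frontier A ∩ {x | a < f x} ⊆ Bᶜ)
    (h2 : frontier B ∩ {x | a < f x} ⊆ Aᶜ)
    (hne : (frontier A ∩ {x | a < f x}).Nonempty) : False := by
  obtain ⟨c, hcF, hcH⟩ := hne
  have hcH' : a < f c := hcH
  have hcB : c ∉ B := h1 ⟨hcF, hcH⟩
  have hco : c ≠ o := by rintro rfl; exact hcB (interior_subset hoB)
  have hg : 0 < bG B o c := bG_pos hBconv hBcomp hoB hco
  have hg1 : 1 < bG B o c := by
    by_contra h
    exact hcB ((bG_le_one_iff hBconv hBcomp hoB).1 (le_of_not_gt h))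
  have hz : expt B o c ∈ frontier B := expt_frontier hBconv hBcomp hoB hco
  have hzH : a < f (expt B o c) := by
    rw [expt_clm, hfo]
    have : 0 < (bG B o c)⁻¹ * (f c - a) := mul_pos (inv_pos.2 hg) (by linarith)
    linarith
  have hzA : expt B o c ∉ A := h2 ⟨hz, hzH⟩
  apply hzA
  have hcA : c ∈ A := hAcomp.isClosed.frontier_subset hcF
  have hseg : expt B o c ∈ segment ℝ o c := by
    refine ⟨1 - (bG B o c)⁻¹, (bG B o c)⁻¹, ?_, le_of_lt (inv_pos.2 hg), by ring, ?_⟩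
    · have : (bG B o c)⁻¹ < 1 := by
        rw [inv_lt_one_iff₀]; right; exact hg1
      linarith
    · rw [expt]; module
  exact hAconv.segment_subset (interior_subset hoA) hcA hseg

lemma dichot (hAconv : Convex ℝ A) (hAcomp : IsCompact A) (hoA : o ∈ interior A)
    (hBcomp : IsCompact B) (hfo : f o = a) {p q : Pt} (hp : f p = a) (hq : f q = a)
    (hfront : frontier A ∩ frontier B = {p, q}) :
    frontier A ∩ {x | a < f x} ⊆ interior B ∨ frontier A ∩ {x | a < f x} ⊆ Bᶜ := by
  apply IsPreconnected.subset_or_subset isOpen_interior hBcomp.isClosed.isOpen_compl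
  · exact Set.disjoint_left.2 fun x hx hxc => hxc (interior_subset hx)
  · rintro x ⟨hxF, hxH⟩
    have hx' : a < f x := hxH
    have hxB : x ∉ frontier B := by
      intro hxB
      have : x ∈ ({p, q} : Set Pt) := hfront ▸ ⟨hxF, hxB⟩
      rcases this with h | h
      · rw [h, hp] at hx'; exact lt_irrefl a hx'
      · rw [(mem_singleton_iff.1 h), hq] at hx'; exact lt_irrefl a hx'
    by_cases hxB' : x ∈ B
    · left
      rw [frontier, hBcomp.isClosed.closure_eq] at hxB
      simp only [mem_diff, not_and, not_not] at hxB
      exact hxB hxB'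
    · right; exact hxB'
  · exact arc_preconnected hAconv hAcomp hoA f a hfo

lemma side_main (hAconv : Convex ℝ A) (hAcomp : IsCompact A)
    (hBconv : Convex ℝ B) (hBcomp : IsCompact B)
    (hAstr : ∀ x ∈ A, ∀ y ∈ A, x ≠ y → openSegment ℝ x y ⊆ interior A)
    (hBstr : ∀ x ∈ B, ∀ y ∈ B, x ≠ y → openSegment ℝ x y ⊆ interior B)
    (hf : f ≠ 0) {p q : Pt} (hp : f p = a) (hq : f q = a) (hpq : p ≠ q)
    (hfront : frontier A ∩ frontier B = {p, q}) :
    A ∩ {x | a < f x} ⊂ B ∩ {x | a < f x} ∨ B ∩ {x | a < f x} ⊂ A ∩ {x | a < f x} := by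
  have hpA : p ∈ frontier A := by
    have : p ∈ ({p, q} : Set Pt) := mem_insert p {q}
    rw [← hfront] at this; exact this.1
  have hpB : p ∈ frontier B := by
    have : p ∈ ({p, q} : Set Pt) := mem_insert p {q}
    rw [← hfront] at this; exact this.2
  have hqA : q ∈ frontier A := by
    have : q ∈ ({p, q} : Set Pt) := mem_insert_of_mem p rfl
    rw [← hfront] at this; exact this.1
  have hqB : q ∈ frontier B := by
    have : q ∈ ({p, q} : Set Pt) := mem_insert_of_mem p rfl
    rw [← hfront] at this; exact this.2
  set o : Pt := (1/2 : ℝ) • p + (1/2 : ℝ) • q with ho_def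
  have hoseg : o ∈ openSegment ℝ p q := ⟨1/2, 1/2, by norm_num, by norm_num, by norm_num, rfl⟩
  have hoA : o ∈ interior A :=
    hAstr p (hAcomp.isClosed.frontier_subset hpA) q (hAcomp.isClosed.frontier_subset hqA) hpq hoseg
  have hoB : o ∈ interior B :=
    hBstr p (hBcomp.isClosed.frontier_subset hpB) q (hBcomp.isClosed.frontier_subset hqB) hpq hoseg
  have hfo : f o = a := by
    rw [ho_def, map_add, map_smul, map_smul, hp, hq]
    simp only [smul_eq_mul]
    ring
  have hCAne : (frontier A ∩ {x | a < f x}).Nonempty := arc_nonempty hAconv hAcomp hoA f a hfo hf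
  have hCBne : (frontier B ∩ {x | a < f x}).Nonempty := arc_nonempty hBconv hBcomp hoB f a hfo hf
  have hdA := dichot hAconv hAcomp hoA hBcomp hfo hp hq hfront
  have hdB := dichot hBconv hBcomp hoB hAcomp hfo hp hq (by rw [inter_comm]; exact hfront)
  rcases hdA with hdA | hdA <;> rcases hdB with hdB | hdB
  · -- both interiors: impossible
    exfalso
    obtain ⟨c, hcF, hcH⟩ := hCAne
    have h1 : B ∩ {x | a < f x} ⊆ interior A := ml hBconv hBcomp hoB hAconv hoA hfo hdB
    have hcB : c ∈ interior B := hdA ⟨hcF, hcH⟩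
    have : c ∈ interior A := h1 ⟨interior_subset hcB, hcH⟩
    rw [frontier, hAcomp.isClosed.closure_eq] at hcF
    exact hcF.2 this
  · -- A's arc inside B, B's arc outside A
    left
    have hsub : A ∩ {x | a < f x} ⊆ B ∩ {x | a < f x} := by
      rintro x ⟨hxA, hxH⟩
      exact ⟨interior_subset (ml hAconv hAcomp hoA hBconv hoB hfo hdA ⟨hxA, hxH⟩), hxH⟩
    obtain ⟨c, hcF, hcH⟩ := hCBne
    refine (ssubset_iff_of_subset hsub).2 ⟨c, ⟨hBcomp.isClosed.frontier_subset hcF, hcH⟩, ?_⟩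
    intro hc
    exact (hdB ⟨hcF, hcH⟩) hc.1
  · -- symmetric
    right
    have hsub : B ∩ {x | a < f x} ⊆ A ∩ {x | a < f x} := by
      rintro x ⟨hxB, hxH⟩
      exact ⟨interior_subset (ml hBconv hBcomp hoB hAconv hoA hfo hdB ⟨hxB, hxH⟩), hxH⟩
    obtain ⟨c, hcF, hcH⟩ := hCAne
    refine (ssubset_iff_of_subset hsub).2 ⟨c, ⟨hAcomp.isClosed.frontier_subset hcF, hcH⟩, ?_⟩
    intro hc
    exact (hdA ⟨hcF, hcH⟩) hc.1
  · exact absurd (no_cross hAconv hAcomp hoA hBconv hBcomp hoB hfo hdA hdB hCAne) not_false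

end Side

section LinAlg

lemma ker_span {f : Pt →L[ℝ] ℝ} (hf : f ≠ 0) {u : Pt} (hu : u ≠ 0) (hfu : f u = 0) :
    ∀ x : Pt, f x = 0 → ∃ s : ℝ, x = s • u := by
  intro x hx
  by_contra h
  push_neg at h
  have hli : LinearIndependent ℝ ![x, u] := by
    rw [linearIndependent_fin2]
    refine ⟨by simpa using hu, fun s hs => h s ?_⟩
    simpa using hs.symm
  have hspan : Submodule.span ℝ (Set.range ![x, u]) = ⊤ :=
    hli.span_eq_top_of_card_eq_finrank (by simp [finrank_euclideanSpace_fin])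
  apply hf
  ext z
  have hz : z ∈ Submodule.span ℝ (Set.range ![x, u]) := hspan ▸ Submodule.mem_top
  induction hz using Submodule.span_induction with
  | mem y hy =>
    obtain ⟨i, rfl⟩ := hy
    fin_cases i <;> simp [hx, hfu]
  | zero => simp
  | add y z _ _ hy hz => simp [map_add, hy, hz]
  | smul c y _ hy => simp [map_smul, hy]

lemma scalar_rel {f g : Pt →L[ℝ] ℝ} (hf : f ≠ 0) {u : Pt} (hu : u ≠ 0)
    (hfu : f u = 0) (hgu : g u = 0) : ∃ t : ℝ, ∀ x, g x = t * f x := by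
  obtain ⟨w, hw⟩ : ∃ w, f w ≠ 0 := by
    by_contra h
    push_neg at h
    exact hf (by ext z; simpa using h z)
  set w' : Pt := (f w)⁻¹ • w with hw'
  have hfw' : f w' = 1 := by rw [hw', map_smul, smul_eq_mul, inv_mul_cancel₀ hw]
  refine ⟨g w', fun x => ?_⟩
  have hker : f (x - f x • w') = 0 := by
    rw [map_sub, map_smul, smul_eq_mul, hfw', mul_one, sub_self]
  obtain ⟨s, hs⟩ := ker_span hf hu hfu _ hker
  have : g (x - f x • w') = 0 := by rw [hs, map_smul, hgu, smul_eq_mul, mul_zero]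
  rw [map_sub, map_smul, smul_eq_mul, sub_eq_zero] at this
  rw [this]; ring

lemma halfplane_normalize {p q : Pt} (hpq : p ≠ q) {L R : Set Pt}
    (hL : IsOpenHalfplaneOf p q L) (hR : IsOpenHalfplaneOf p q R) (hLR : L ≠ R) :
    ∃ (f : Pt →L[ℝ] ℝ) (a : ℝ), f ≠ 0 ∧ f p = a ∧ f q = a ∧
      L = {x | a < f x} ∧ R = {x | f x < a} := by
  obtain ⟨f₁, a, hf₁, hf₁p, hf₁q, hLe⟩ := hL
  obtain ⟨g₁, b, hg₁, hg₁p, hg₁q, hRe⟩ := hR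
  set f : Pt →L[ℝ] ℝ := LinearMap.toContinuousLinearMap f₁ with hfdef
  set g : Pt →L[ℝ] ℝ := LinearMap.toContinuousLinearMap g₁ with hgdef
  have hfc : ∀ x, f x = f₁ x := fun x => rfl
  have hgc : ∀ x, g x = g₁ x := fun x => rfl
  have hf : f ≠ 0 := by
    intro h
    apply hf₁
    ext z
    have := DFunLike.congr_fun h z
    simpa [hfc] using this
  have hg : g ≠ 0 := by
    intro h
    apply hg₁
    ext z
    have := DFunLike.congr_fun h z
    simpa [hgc] using this
  have hu : q - p ≠ 0 := sub_ne_zero_of_ne (Ne.symm hpq)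
  have hfu : f (q - p) = 0 := by rw [map_sub, hfc, hfc, hf₁p, hf₁q, sub_self]
  have hgu : g (q - p) = 0 := by rw [map_sub, hgc, hgc, hg₁p, hg₁q, sub_self]
  obtain ⟨t, ht⟩ := scalar_rel hf hu hfu hgu
  have ht0 : t ≠ 0 := by
    intro h
    apply hg
    ext z
    simp [ht z, h]
  have hb : b = t * a := by rw [← hg₁p, ← hgc, ht p, hfc, hf₁p]
  have key : ∀ x, g₁ x = t * f₁ x := fun x => by rw [← hgc, ht x, hfc]
  rcases lt_or_gt_of_ne ht0 with htneg | htpos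
  · refine ⟨f, a, hf, (hfc p).trans hf₁p, (hfc q).trans hf₁q, by rw [hLe]; rfl, ?_⟩
    rw [hRe]
    ext x
    simp only [mem_setOf_eq, key x, hb, hfc]
    exact mul_lt_mul_left_of_neg htneg
  · exfalso
    apply hLR
    rw [hLe, hRe]
    ext x
    simp only [mem_setOf_eq, key x, hb]
    exact (mul_lt_mul_iff_right₀ htpos).symm

end LinAlg

section Chord

lemma chord_subset {A : Set Pt} (hAcl : IsClosed A)
    (hAstr : ∀ x ∈ A, ∀ y ∈ A, x ≠ y → openSegment ℝ x y ⊆ interior A)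
    {f : Pt →L[ℝ] ℝ} {a : ℝ} {p q : Pt} (hf : f ≠ 0)
    (hp : f p = a) (hq : f q = a) (hpq : p ≠ q)
    (hpA : p ∈ frontier A) (hqA : q ∈ frontier A) :
    ∀ x ∈ A, f x = a → x ∈ segment ℝ p q := by
  intro x hxA hxa
  have hu : q - p ≠ 0 := sub_ne_zero_of_ne (Ne.symm hpq)
  have hfu : f (q - p) = 0 := by rw [map_sub, hp, hq, sub_self]
  obtain ⟨s, hs⟩ : ∃ s : ℝ, x - p = s • (q - p) :=
    ker_span hf hu hfu _ (by rw [map_sub, hp, hxa, sub_self])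
  have hxe : x = p + s • (q - p) := by rw [← hs]; abel
  have hpmem : p ∈ A := hAcl.frontier_subset hpA
  have hqmem : q ∈ A := hAcl.frontier_subset hqA
  rcases le_or_gt 0 s with hs0 | hs0
  · rcases le_or_gt s 1 with hs1 | hs1
    · -- x ∈ segment p q
      exact ⟨1 - s, s, by linarith, hs0, by ring, by rw [hxe]; module⟩
    · -- s > 1 : q ∈ openSegment p x, q interior, contradiction
      exfalso
      have hxp : x ≠ p := by
        intro h
        rw [h] at hxe
        have : s • (q - p) = 0 := by
          have := hxe.symm
          rwa [add_eq_left] at this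
        rcases smul_eq_zero.1 this with h' | h'
        · rw [h'] at hs1; linarith
        · exact hu h'
      have hqseg : q ∈ openSegment ℝ p x := by
        refine ⟨1 - 1/s, 1/s, ?_, by positivity, by ring, ?_⟩
        · have : 1/s < 1 := by rw [div_lt_one (by linarith)]; linarith
          linarith
        · rw [hxe]
          have hs' : s ≠ 0 := by linarith
          match_scalars <;> (field_simp; try ring)
      have := hAstr p hpmem x hxA (Ne.symm hxp) hqseg
      rw [frontier, hAcl.closure_eq] at hqA
      exact hqA.2 this
  · -- s < 0 : p ∈ openSegment x q, contradiction
    exfalso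
    have hxq : x ≠ q := by
      intro h
      have hsq := hs
      rw [h] at hsq
      have h1 : (1 - s) • (q - p) = 0 := by
        rw [sub_smul, one_smul, ← hsq, sub_self]
      rcases smul_eq_zero.1 h1 with h' | h'
      · have hs1 : s = 1 := by linarith
        linarith
      · exact hu h'
    have hden : (0:ℝ) < 1 - s := by linarith
    have hpseg : p ∈ openSegment ℝ x q := by
      refine ⟨1/(1-s), -s/(1-s), div_pos one_pos hden,
        div_pos (by linarith) hden, ?_, ?_⟩
      · field_simp
        ring
      · rw [hxe]
        have hs' : (1:ℝ) - s ≠ 0 := by linarith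
        match_scalars <;> (field_simp; try ring)
    have := hAstr x hxA q hqmem hxq hpseg
    rw [frontier, hAcl.closure_eq] at hpA
    exact hpA.2 this

end Chord

section Rigid

/-- the unique maximizer property at a common boundary point forces a homothety
mapping `A` onto `B ⊇ A` to fix that point -/
lemma rigid_fix {A B : Set Pt} (hBconv : Convex ℝ B) (hBcl : IsClosed B)
    (hBint : (interior B).Nonempty)
    (hBstr : ∀ x ∈ B, ∀ y ∈ B, x ≠ y → openSegment ℝ x y ⊆ interior B)
    {p : Pt} (hpB : p ∈ frontier B) (hsub : A ⊆ B)
    {lam : ℝ} {w : Pt} (hlam : 0 < lam)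
    (hBe : B = (fun x : Pt => lam • x + w) '' A) (hpA : p ∈ A) :
    lam • p + w = p := by
  have hpnotint : p ∉ interior B := by
    rw [frontier, hBcl.closure_eq] at hpB; exact hpB.2
  obtain ⟨f₀, hf₀⟩ := geometric_hahn_banach_open_point (hBconv.interior) isOpen_interior hpnotint
  obtain ⟨o₀, ho₀⟩ := hBint
  -- f₀ ≤ f₀ p on B
  have hle : ∀ z ∈ B, f₀ z ≤ f₀ p := by
    intro z hz
    by_contra hgt
    push_neg at hgt
    have hM : 0 < f₀ p - f₀ o₀ := by have := hf₀ o₀ ho₀; linarith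
    set M : ℝ := f₀ p - f₀ o₀ with hMdef
    set d : ℝ := f₀ z - f₀ p with hddef
    have hd : 0 < d := by simp [hddef]; linarith
    set t : ℝ := M / (M + d) with htdef
    have hMd : 0 < M + d := by linarith
    have ht0 : 0 < t := div_pos hM hMd
    have ht1 : t < 1 := by rw [htdef, div_lt_one hMd]; linarith
    have hy : (1 - t) • o₀ + t • z ∈ interior B :=
      hBconv.combo_interior_self_mem_interior ho₀ hz (by linarith) (le_of_lt ht0) (by ring)
    have hlt := hf₀ _ hy
    rw [map_add, map_smul, map_smul, smul_eq_mul, smul_eq_mul] at hlt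
    have htd : t * (M + d) = M := by rw [htdef]; field_simp
    nlinarith [hlt]
  -- unique maximizer in B
  have huniq : ∀ b ∈ B, f₀ b = f₀ p → b = p := by
    intro b hb hfb
    by_contra hbp
    have hm : (1/2 : ℝ) • b + (1/2 : ℝ) • p ∈ openSegment ℝ b p :=
      ⟨1/2, 1/2, by norm_num, by norm_num, by norm_num, rfl⟩
    have hpmem : p ∈ B := hBcl.frontier_subset hpB
    have hint := hBstr b hb p hpmem hbp hm
    have hlt := hf₀ _ hint
    rw [map_add, map_smul, map_smul, smul_eq_mul, smul_eq_mul] at hlt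
    linarith
  -- lam • p + w is also a maximizer
  have hhp : lam • p + w ∈ B := hBe ▸ ⟨p, hpA, rfl⟩
  have hmax : ∀ z ∈ B, f₀ z ≤ f₀ (lam • p + w) := by
    intro z hz
    rw [hBe] at hz
    obtain ⟨x, hx, rfl⟩ := hz
    rw [map_add, map_smul, map_add, map_smul, smul_eq_mul, smul_eq_mul]
    have : f₀ x ≤ f₀ p := hle x (hsub hx)
    nlinarith
  have heq : f₀ (lam • p + w) = f₀ p :=
    le_antisymm (hle _ hhp) (hmax p (hBcl.frontier_subset hpB))
  exact huniq _ hhp heq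

lemma rigid {A B : Set Pt} (hBconv : Convex ℝ B) (hBcl : IsClosed B)
    (hBint : (interior B).Nonempty)
    (hBstr : ∀ x ∈ B, ∀ y ∈ B, x ≠ y → openSegment ℝ x y ⊆ interior B)
    {p q : Pt} (hpq : p ≠ q) (hpB : p ∈ frontier B) (hqB : q ∈ frontier B)
    (hsub : A ⊆ B) {lam : ℝ} {w : Pt} (hlam : 0 < lam)
    (hBe : B = (fun x : Pt => lam • x + w) '' A)
    (hpA : p ∈ A) (hqA : q ∈ A) : A = B := by
  have hp := rigid_fix hBconv hBcl hBint hBstr hpB hsub hlam hBe hpA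
  have hq := rigid_fix hBconv hBcl hBint hBstr hqB hsub hlam hBe hqA
  have hlam1 : lam = 1 := by
    have h1 : lam • (p - q) = p - q := by
      rw [smul_sub]
      have := congrArg₂ (· - ·) hp hq
      simpa using this
    have h2 : (lam - 1) • (p - q) = 0 := by rw [sub_smul, one_smul, h1, sub_self]
    rcases smul_eq_zero.1 h2 with h' | h'
    · linarith [sub_eq_zero.1 h']
    · exact absurd (sub_eq_zero.1 h') hpq
  have hw : w = 0 := by
    rw [hlam1, one_smul] at hp
    simpa using hp
  rw [hBe, hlam1, hw]
  ext z
  simp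

end Rigid

lemma range_trans {S T₁ T₂ : Set Pt} (h1 : IsRange S T₁) (h2 : IsRange S T₂) :
    ∃ (lam : ℝ) (w : Pt), 0 < lam ∧ T₂ = (fun x : Pt => lam • x + w) '' T₁ := by
  obtain ⟨c₁, v₁, hc₁, he₁⟩ := h1
  obtain ⟨c₂, v₂, hc₂, he₂⟩ := h2
  refine ⟨c₂ / c₁, v₂ - (c₂ / c₁) • v₁, div_pos hc₂ hc₁, ?_⟩
  have hc₁' : c₁ ≠ 0 := ne_of_gt hc₁
  have key : ∀ x : Pt, (c₂/c₁) • (c₁ • x + v₁) + (v₂ - (c₂/c₁) • v₁) = c₂ • x + v₂ := by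
    intro x
    rw [smul_add, smul_smul, div_mul_cancel₀ _ hc₁']
    abel
  rw [he₁, he₂, Set.image_image]
  exact (Set.image_congr' key).symm

/-- if the boundaries of two distinct ranges of a nice shape meet in
exactly the two points `p, q`, then on each side of the line `pq` one range
properly contains the other, in opposite ways. -/
theorem ranges_nested_in_halfplanes
    (S : Set Pt) (hS : NiceShape S)
    (S₁ S₂ : Set Pt) (h1 : IsRange S S₁) (h2 : IsRange S S₂) (hne : S₁ ≠ S₂)
    (p q : Pt) (hpq : p ≠ q) (hb : frontier S₁ ∩ frontier S₂ = {p, q})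
    (L R : Set Pt) (hL : IsOpenHalfplaneOf p q L) (hR : IsOpenHalfplaneOf p q R)
    (hLR : L ≠ R) :
    (S₁ ∩ L ⊂ S₂ ∩ L ∧ S₂ ∩ R ⊂ S₁ ∩ R) ∨
    (S₂ ∩ L ⊂ S₁ ∩ L ∧ S₁ ∩ R ⊂ S₂ ∩ R) := by
  obtain ⟨hSne, hSconv, hScomp, hSline, hSnoseg⟩ := hS
  obtain ⟨hA1conv, hA1comp, hA1ns, hA1int⟩ := range_props hSconv hScomp hSnoseg h1
  obtain ⟨hA2conv, hA2comp, hA2ns, hA2int⟩ := range_props hSconv hScomp hSnoseg h2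
  -- basic membership facts
  have hp1 : p ∈ frontier S₁ := by
    have : p ∈ ({p, q} : Set Pt) := mem_insert p {q}
    rw [← hb] at this; exact this.1
  have hp2 : p ∈ frontier S₂ := by
    have : p ∈ ({p, q} : Set Pt) := mem_insert p {q}
    rw [← hb] at this; exact this.2
  have hq1 : q ∈ frontier S₁ := by
    have : q ∈ ({p, q} : Set Pt) := mem_insert_of_mem p rfl
    rw [← hb] at this; exact this.1
  have hq2 : q ∈ frontier S₂ := by
    have : q ∈ ({p, q} : Set Pt) := mem_insert_of_mem p rfl
    rw [← hb] at this; exact this.2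
  -- interior of S is nonempty
  have hSint : (interior S).Nonempty := by
    by_contra hemp
    have h1e : interior S₁ = ∅ := not_nonempty_iff_eq_empty.1 (fun h => hemp (hA1int.2 h))
    have h2e : interior S₂ = ∅ := not_nonempty_iff_eq_empty.1 (fun h => hemp (hA2int.2 h))
    have hf1 : frontier S₁ = S₁ := by
      rw [frontier, hA1comp.isClosed.closure_eq, h1e, diff_empty]
    have hf2 : frontier S₂ = S₂ := by
      rw [frontier, hA2comp.isClosed.closure_eq, h2e, diff_empty]
    rw [hf1, hf2] at hb
    have hm : (1/2 : ℝ) • p + (1/2 : ℝ) • q ∈ S₁ ∩ S₂ := by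
      constructor
      · exact hA1conv (hb ▸ (mem_insert p {q}) : p ∈ S₁ ∩ S₂).1
          (hb ▸ (mem_insert_of_mem p rfl) : q ∈ S₁ ∩ S₂).1 (by norm_num) (by norm_num) (by norm_num)
      · exact hA2conv (hb ▸ (mem_insert p {q}) : p ∈ S₁ ∩ S₂).2
          (hb ▸ (mem_insert_of_mem p rfl) : q ∈ S₁ ∩ S₂).2 (by norm_num) (by norm_num) (by norm_num)
    rw [hb] at hm
    rcases hm with hm | hm
    · apply hpq
      have h4 : (1/2 : ℝ) • (q - p) = ((1/2 : ℝ) • p + (1/2 : ℝ) • q) - p := by module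
      rw [hm, sub_self] at h4
      rcases smul_eq_zero.1 h4 with h' | h'
      · norm_num at h'
      · exact (sub_eq_zero.1 h').symm
    · apply hpq
      rw [mem_singleton_iff] at hm
      have h4 : (1/2 : ℝ) • (p - q) = ((1/2 : ℝ) • p + (1/2 : ℝ) • q) - q := by module
      rw [hm, sub_self] at h4
      rcases smul_eq_zero.1 h4 with h' | h'
      · norm_num at h'
      · exact sub_eq_zero.1 h'
  have hint1 : (interior S₁).Nonempty := hA1int.1 hSint
  have hint2 : (interior S₂).Nonempty := hA2int.1 hSint
  have hstr1 := strict_of_noseg hA1conv hA1comp.isClosed hA1ns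
  have hstr2 := strict_of_noseg hA2conv hA2comp.isClosed hA2ns
  -- normalize halfplanes
  obtain ⟨f, a, hf, hfp, hfq, hLe, hRe⟩ := halfplane_normalize hpq hL hR hLR
  -- negated functional for R
  have hfnp : (-f) p = -a := by simp [hfp]
  have hfnq : (-f) q = -a := by simp [hfq]
  have hfn : (-f : Pt →L[ℝ] ℝ) ≠ 0 := by
    intro h
    apply hf
    have := congrArg (fun g : Pt →L[ℝ] ℝ => -g) h
    simpa using this
  have hRe' : R = {x | -a < (-f) x} := by
    rw [hRe]; ext x; simp [neg_lt_neg_iff]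
  have hdL := side_main hA1conv hA1comp hA2conv hA2comp hstr1 hstr2 hf hfp hfq hpq hb
  have hdR := side_main hA1conv hA1comp hA2conv hA2comp hstr1 hstr2 hfn hfnp hfnq hpq hb
  rw [← hLe] at hdL
  rw [← hRe'] at hdR
  -- homothety between the two ranges
  obtain ⟨lam, w, hlam, h21⟩ := range_trans h1 h2
  obtain ⟨lam', w', hlam', h12⟩ := range_trans h2 h1
  -- chord inclusion helper
  have hchord : ∀ {s : Set Pt} (_ : segment ℝ p q ⊆ s),
      ∀ {T : Set Pt}, IsClosed T →
      (∀ x ∈ T, ∀ y ∈ T, x ≠ y → openSegment ℝ x y ⊆ interior T) →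
      p ∈ frontier T → q ∈ frontier T →
      T ∩ L ⊆ s → T ∩ R ⊆ s → T ⊆ s := by
    intro s hseg T hTcl hTstr hpT hqT hTL hTR x hx
    rcases lt_trichotomy a (f x) with h | h | h
    · exact hTL ⟨hx, by rw [hLe]; exact h⟩
    · exact hseg (chord_subset hTcl hTstr hf hfp hfq hpq hpT hqT x hx h.symm)
    · exact hTR ⟨hx, by rw [hRe]; exact h⟩
  have hseg1 : segment ℝ p q ⊆ S₁ :=
    hA1conv.segment_subset (hA1comp.isClosed.frontier_subset hp1)
      (hA1comp.isClosed.frontier_subset hq1)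
  have hseg2 : segment ℝ p q ⊆ S₂ :=
    hA2conv.segment_subset (hA2comp.isClosed.frontier_subset hp2)
      (hA2comp.isClosed.frontier_subset hq2)
  rcases hdL with hdL | hdL <;> rcases hdR with hdR | hdR
  · -- S₁ ⊆ S₂ on both sides: contradiction
    exfalso
    apply hne
    have hsub : S₁ ⊆ S₂ := hchord hseg2 hA1comp.isClosed hstr1 hp1 hq1
      (fun x hx => (hdL.1 hx).1) (fun x hx => (hdR.1 hx).1)
    exact rigid hA2conv hA2comp.isClosed hint2 hstr2 hpq hp2 hq2 hsub hlam h21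
      (hA1comp.isClosed.frontier_subset hp1) (hA1comp.isClosed.frontier_subset hq1)
  · exact Or.inl ⟨hdL, hdR⟩
  · exact Or.inr ⟨hdL, hdR⟩
  · -- S₂ ⊆ S₁ on both sides: contradiction
    exfalso
    apply hne
    have hsub : S₂ ⊆ S₁ := hchord hseg1 hA2comp.isClosed hstr2 hp2 hq2
      (fun x hx => (hdL.1 hx).1) (fun x hx => (hdR.1 hx).1)
    exact (rigid hA1conv hA1comp.isClosed hint1 hstr1 hpq hp1 hq1 hsub hlam' h12
      (hA2comp.isClosed.frontier_subset hp2) (hA2comp.isClosed.frontier_subset hq2)).symm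
end
end

section
/- Let S ⊆ ℝ² be a nice shape, X ⊆ ℝ² a finite point set, and Y ⊆ X a subset with |Y| ≥ 2 such that X ∩ S₀ = Y for some S-range S₀. Then there exists an S-range S' with X ∩ S' = Y such that the boundary ∂S' contains at least two points of X. -/
open Set

noncomputable section

open Topology Filter

/-- The affine map `x ↦ t • x + v` as a homeomorphism of the plane. -/
def affHomeo (t : ℝ) (ht : t ≠ 0) (v : Pt) : Pt ≃ₜ Pt :=
  (Homeomorph.smulOfNeZero t ht).trans (Homeomorph.addRight v)

lemma affHomeo_apply (t : ℝ) (ht : t ≠ 0) (v x : Pt) :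
    affHomeo t ht v x = t • x + v := rfl

lemma isRange_homothety {S K : Set Pt} (h : IsRange S K) {t : ℝ} (ht : 0 < t) (p : Pt) :
    IsRange S ((fun x => t • x + (1 - t) • p) '' K) := by
  obtain ⟨c, v, hc, rfl⟩ := h
  refine ⟨t * c, t • v + (1 - t) • p, by positivity, ?_⟩
  rw [Set.image_image]
  refine Set.image_congr' (fun x => ?_)
  match_scalars <;> ring

lemma convex_homothety {K : Set Pt} (hK : Convex ℝ K) (t : ℝ) (v : Pt) :
    Convex ℝ ((fun x => t • x + v) '' K) := by
  rintro _ ⟨x, hx, rfl⟩ _ ⟨y, hy, rfl⟩ a b ha hb hab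
  refine ⟨a • x + b • y, hK hx hy ha hb hab, ?_⟩
  have h1 : (1:ℝ) = a + b := hab.symm
  match_scalars
  · ring
  · ring
  · linarith

lemma hom_mono {K : Set Pt} (hK : Convex ℝ K) {p : Pt} (hp : p ∈ K)
    {s t : ℝ} (hs : 0 ≤ s) (hst : s ≤ t) (ht0 : 0 < t) :
    (fun x => s • x + (1 - s) • p) '' K ⊆ (fun x => t • x + (1 - t) • p) '' K := by
  rintro _ ⟨x, hx, rfl⟩
  have hdiv0 : 0 ≤ s / t := by positivity
  have hdiv1 : s / t ≤ 1 := by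
    rw [div_le_one ht0]; exact hst
  refine ⟨(s / t) • x + (1 - s / t) • p, hK hx hp hdiv0 (by linarith) (by ring), ?_⟩
  have hts : t * (s / t) = s := by field_simp
  match_scalars
  · linarith [hts]
  · nlinarith [hts]

lemma hom_contract {K : Set Pt} (hK : Convex ℝ K) {p : Pt} (hp : p ∈ K)
    {t : ℝ} (h0 : 0 ≤ t) (h1 : t ≤ 1) :
    (fun x => t • x + (1 - t) • p) '' K ⊆ K := by
  rintro _ ⟨x, hx, rfl⟩
  exact hK hx hp h0 (by linarith) (by ring)

lemma mem_hom_self (p : Pt) (t : ℝ) {K : Set Pt} (hp : p ∈ K) :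
    p ∈ (fun x => t • x + (1 - t) • p) '' K :=
  ⟨p, hp, by match_scalars; ring⟩

lemma shrink_step {K : Set Pt} (hKc : IsCompact K) (hKv : Convex ℝ K)
    {p : Pt} {F : Set Pt} (hF : F.Finite) (hFK : F ⊆ K) (hpF : p ∈ F)
    {q0 : Pt} (hq0 : q0 ∈ F) (hq0p : q0 ≠ p) :
    ∃ t : ℝ, 0 < t ∧ t ≤ 1 ∧ ∃ q ∈ F, q ≠ p ∧
      F ⊆ (fun x => t • x + (1 - t) • p) '' K ∧
      (fun x => t • x + (1 - t) • p) '' K ⊆ K ∧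
      q ∈ frontier ((fun x => t • x + (1 - t) • p) '' K) := by
  have hpK : p ∈ K := hFK hpF
  set Φ : ℝ → Set Pt := fun t => (fun x => t • x + (1 - t) • p) '' K with hΦ
  set A : Pt → Set ℝ := fun q => {t | t ∈ Icc (0:ℝ) 1 ∧ q ∈ Φ t} with hA
  -- each A q is compact
  have hAcomp : ∀ q : Pt, IsCompact (A q) := by
    intro q
    have : A q = Prod.fst '' ((Icc (0:ℝ) 1 ×ˢ K) ∩
        {z : ℝ × Pt | z.1 • z.2 + (1 - z.1) • p = q}) := by
      ext t
      constructor
      · rintro ⟨ht, x, hx, hxe⟩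
        exact ⟨(t, x), ⟨⟨ht, hx⟩, hxe⟩, rfl⟩
      · rintro ⟨⟨t', x⟩, ⟨⟨ht, hx⟩, hxe⟩, rfl⟩
        exact ⟨ht, x, hx, hxe⟩
    rw [this]
    refine IsCompact.image ?_ continuous_fst
    refine (isCompact_Icc.prod hKc).inter_right ?_
    have : Continuous fun z : ℝ × Pt => z.1 • z.2 + (1 - z.1) • p :=
      (continuous_fst.smul continuous_snd).add
        ((continuous_const.sub continuous_fst).smul continuous_const)
    exact isClosed_eq this continuous_const
  have hAne : ∀ q ∈ F, (A q).Nonempty := by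
    intro q hq
    exact ⟨1, ⟨le_of_lt one_pos, le_refl 1⟩, q, hFK hq, by match_scalars <;> ring⟩
  -- the infimum of each A q
  set lam : Pt → ℝ := fun q => sInf (A q) with hlam
  have hlam_mem : ∀ q ∈ F, lam q ∈ A q := fun q hq => (hAcomp q).sInf_mem (hAne q hq)
  -- choose the q ∈ F \ {p} maximizing lam
  obtain ⟨q, hqF', hqmax⟩ := Set.exists_max_image (F \ {p}) lam hF.diff ⟨q0, hq0, hq0p⟩
  obtain ⟨hqF, hqp⟩ := hqF'
  set t := lam q with hts
  have htA : t ∈ A q := hlam_mem q hqF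
  have ht0 : 0 ≤ t := htA.1.1
  have ht1 : t ≤ 1 := htA.1.2
  have htne : t ≠ 0 := by
    intro h
    obtain ⟨x, _, hxe⟩ := htA.2
    rw [h] at hxe
    apply hqp
    calc q = (0:ℝ) • x + (1 - 0) • p := hxe.symm
    _ = p := by match_scalars <;> ring
  have htpos : 0 < t := lt_of_le_of_ne ht0 (Ne.symm htne)
  refine ⟨t, htpos, ht1, q, hqF, hqp, ?_, hom_contract hKv hpK ht0 ht1, ?_⟩
  · -- F ⊆ Φ t
    intro q' hq'
    rcases eq_or_ne q' p with rfl | hne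
    · exact mem_hom_self _ _ hpK
    · have hmem : lam q' ∈ A q' := hlam_mem q' hq'
      have hle : lam q' ≤ t := hqmax q' ⟨hq', hne⟩
      exact hom_mono hKv hpK hmem.1.1 hle htpos hmem.2
  · -- q ∈ frontier (Φ t)
    have hqmemt : q ∈ Φ t := htA.2
    rw [frontier, mem_diff]
    refine ⟨subset_closure hqmemt, ?_⟩
    intro hint
    -- translate to the homeomorphism picture
    set e := affHomeo t htne ((1 - t) • p) with he
    have him : Φ t = e '' K := rfl
    have hintK : interior (Φ t) = e '' interior K := by
      rw [him, ← Homeomorph.image_interior]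
    rw [hintK] at hint
    obtain ⟨z, hz, hze⟩ := hint
    -- z = p + t⁻¹ • (q - p)
    set w : ℝ → Pt := fun s => p + s⁻¹ • (q - p) with hw
    have hwt : w t = z := by
      have : e (w t) = e z := by
        rw [hze, affHomeo_apply]
        show t • (p + t⁻¹ • (q - p)) + (1 - t) • p = q
        have h2 : t * t⁻¹ = 1 := mul_inv_cancel₀ htne
        match_scalars
        · nlinarith [h2]
        · nlinarith [h2]
      exact e.injective this
    have hcont : ContinuousAt w t :=
      continuousAt_const.add ((continuousAt_inv₀ htne).smul continuousAt_const)
    have hev : ∀ᶠ s in 𝓝 t, w s ∈ interior K := by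
      apply hcont.eventually_mem
      rw [hwt]
      exact isOpen_interior.mem_nhds hz
    have hev2 : ∀ᶠ s in 𝓝 t, 0 < s := eventually_gt_nhds htpos
    have hev3 : ∀ᶠ s in 𝓝[<] t, (w s ∈ interior K ∧ 0 < s) ∧ s < t := by
      refine Filter.Eventually.and ?_ ?_
      · exact (hev.and hev2).filter_mono nhdsWithin_le_nhds
      · exact eventually_mem_nhdsWithin
    obtain ⟨s, ⟨hwsK, hs0⟩, hst⟩ := hev3.exists
    -- s ∈ A q, contradicting t = sInf (A q)
    have hsA : s ∈ A q := by
      refine ⟨⟨le_of_lt hs0, le_trans (le_of_lt hst) ht1⟩, w s, interior_subset hwsK, ?_⟩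
      show s • (p + s⁻¹ • (q - p)) + (1 - s) • p = q
      have h2 : s * s⁻¹ = 1 := mul_inv_cancel₀ (ne_of_gt hs0)
      match_scalars
      · nlinarith [h2]
      · nlinarith [h2]
    have : t ≤ s := csInf_le ⟨0, fun x hx => hx.1.1⟩ hsA
    linarith

/-- every subset of `X` with at least two elements that is captured
by some `S`-range is captured by an `S`-range with at least two points of `X` on
its boundary. -/
theorem exists_capturing_range_with_two_boundary_points
    (S : Set Pt) (hS : NiceShape S) (X : Finset Pt)
    (Y : Set Pt) (hYX : Y ⊆ ↑X) (hY2 : 2 ≤ Y.ncard)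
    (S₀ : Set Pt) (h₀ : IsRange S S₀) (hcap : ↑X ∩ S₀ = Y) :
    ∃ S' : Set Pt, IsRange S S' ∧ ↑X ∩ S' = Y ∧
      2 ≤ ((↑X : Set Pt) ∩ frontier S').ncard := by
  obtain ⟨hSne, hScv, hScp, -, -⟩ := hS
  have hYfin : Y.Finite := X.finite_toSet.subset hYX
  obtain ⟨p₀, q₀, hp₀Y, hq₀Y, hpq₀⟩ := (Set.one_lt_ncard_iff hYfin).mp (by omega)
  have hYS₀ : Y ⊆ S₀ := by rw [← hcap]; exact inter_subset_right
  -- S₀ is compact and convex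
  obtain ⟨c, v, hc, hS₀⟩ := h₀
  have hS₀c : IsCompact S₀ := by
    rw [hS₀]
    exact hScp.image ((continuous_const_smul c).add continuous_const)
  have hS₀v : Convex ℝ S₀ := hS₀ ▸ convex_homothety hScv c v
  -- Step 1: shrink about p₀
  obtain ⟨t₁, ht₁0, ht₁1, q, hqY, hqp₀, hYT₁, hT₁S₀, hqfr⟩ :=
    shrink_step hS₀c hS₀v hYfin hYS₀ hp₀Y hq₀Y hpq₀.symm
  set T₁ : Set Pt := (fun x => t₁ • x + (1 - t₁) • p₀) '' S₀ with hT₁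
  have hT₁c : IsCompact T₁ :=
    hS₀c.image ((continuous_const_smul t₁).add continuous_const)
  have hT₁v : Convex ℝ T₁ := convex_homothety hS₀v t₁ _
  have hT₁range : IsRange S T₁ := isRange_homothety ⟨c, v, hc, hS₀⟩ ht₁0 p₀
  -- Step 2: shrink about q
  obtain ⟨t₂, ht₂0, ht₂1, r, hrY, hrq, hYT₂, hT₂T₁, hrfr⟩ :=
    shrink_step hT₁c hT₁v hYfin hYT₁ hqY hp₀Y hqp₀.symm
  set T₂ : Set Pt := (fun x => t₂ • x + (1 - t₂) • q) '' T₁ with hT₂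
  have hT₂range : IsRange S T₂ := isRange_homothety hT₁range ht₂0 q
  -- q is still on the frontier of T₂
  have hqfr₂ : q ∈ frontier T₂ := by
    set e := affHomeo t₂ (ne_of_gt ht₂0) ((1 - t₂) • q) with he
    have him : T₂ = e '' T₁ := rfl
    have : frontier T₂ = e '' frontier T₁ := by rw [him, ← Homeomorph.image_frontier]
    rw [this]
    refine ⟨q, hqfr, ?_⟩
    show t₂ • q + (1 - t₂) • q = q
    match_scalars <;> ring
  refine ⟨T₂, hT₂range, ?_, ?_⟩
  · apply Subset.antisymm
    · intro x hx
      rw [← hcap]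
      exact ⟨hx.1, hT₁S₀ (hT₂T₁ hx.2)⟩
    · exact fun y hy => ⟨hYX hy, hYT₂ hy⟩
  · have hfin : ((↑X : Set Pt) ∩ frontier T₂).Finite := X.finite_toSet.inter_of_left _
    have : 1 < ((↑X : Set Pt) ∩ frontier T₂).ncard := by
      rw [Set.one_lt_ncard_iff hfin]
      exact ⟨q, r, ⟨hYX hqY, hqfr₂⟩, ⟨hYX hrY, hrfr⟩, (hrq.symm : q ≠ r)⟩
    omega
end
end
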